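/- arXiv:2312.02057 — 6 statements merged into one kernel-verified Lean document; each statement's English description precedes it below -/
import Mathlib

section
/- Let $a_1,\dots,a_n$ be distinct square-free positive integers. Then the set $\{\sqrt{a_1},\dots,\sqrt{a_n}\}$ is linearly independent over the rationals: if $x_1,\dots,x_n \in \mathbb{Q}$ satisfy $\sum_{i=1}^n x_i \sqrt{a_i} = 0$, then all $x_i = 0$. -/
open Real Finset

noncomputable def sqF (s : Finset ℕ) : Subfield ℝ :=
  Subfield.closure ((fun p : ℕ => Real.sqrt p) '' ↑s)


lemma sqrt_mem_sqF {s : Finset ℕ} {m : ℕ} (hm : Squarefree m)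
    (hsub : m.primeFactors ⊆ s) : Real.sqrt m ∈ sqF s := by
  have h1 : (m : ℝ) = (∏ p ∈ m.primeFactors, Real.sqrt p) ^ 2 := by
    rw [← Finset.prod_pow]
    have : ∀ p ∈ m.primeFactors, (Real.sqrt p) ^ 2 = (p : ℝ) := fun p _ =>
      Real.sq_sqrt (Nat.cast_nonneg p)
    rw [Finset.prod_congr rfl this, ← Nat.cast_prod,
      Nat.prod_primeFactors_of_squarefree hm]
  rw [show Real.sqrt m = ∏ p ∈ m.primeFactors, Real.sqrt p by
    rw [h1, Real.sqrt_sq (Finset.prod_nonneg fun p _ => Real.sqrt_nonneg _)]]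
  exact prod_mem fun p hp => Subfield.subset_closure ⟨p, hsub hp, rfl⟩

lemma sqrt_notMem_sqF : ∀ (s : Finset ℕ), (∀ r ∈ s, Nat.Prime r) →
    ∀ m : ℕ, Squarefree m → (∃ p : ℕ, p.Prime ∧ p ∣ m ∧ p ∉ s) →
    Real.sqrt m ∉ sqF s := by
  intro s
  induction s using Finset.induction_on with
  | empty =>
    rintro - m hm ⟨p, hp, hpm, -⟩ hmem
    have hirr : Irrational (Real.sqrt m) := by
      refine irrational_sqrt_natCast_iff.2 fun ⟨k, hk⟩ => ?_
      have hk1 : IsUnit k := hm k (by rw [hk])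
      have : m = 1 := by rw [hk, Nat.isUnit_iff.1 hk1]
      exact hp.one_lt.ne' (Nat.dvd_one.1 (this ▸ hpm))
    have hle : sqF ∅ ≤ (Rat.castHom ℝ).fieldRange := Subfield.closure_le.2 (by simp)
    obtain ⟨q, hq⟩ := RingHom.mem_fieldRange.1 (hle hmem)
    exact hirr ⟨q, hq⟩
  | @insert q s hqs ih =>
    intro hprime m hm ⟨p, hp, hpm, hps⟩ hmem
    have hq : Nat.Prime q := hprime q (mem_insert_self _ _)
    have ih' := ih fun r hr => hprime r (mem_insert_of_mem hr)
    have hqF : Real.sqrt q ∉ sqF s :=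
      ih' q hq.squarefree ⟨q, hq, dvd_refl q, hqs⟩
    have hq0 : (0:ℝ) ≤ (q:ℝ) := Nat.cast_nonneg q
    have hqq : Real.sqrt q * Real.sqrt q = (q:ℝ) := Real.mul_self_sqrt hq0
    -- decomposition of membership in sqF (insert q s)
    have decomp : ∀ x ∈ sqF (insert q s),
        ∃ a ∈ sqF s, ∃ b ∈ sqF s, x = a + b * Real.sqrt q := by
      intro x hx
      refine Subfield.closure_induction (p := fun x _ =>
        ∃ a ∈ sqF s, ∃ b ∈ sqF s, x = a + b * Real.sqrt q) ?_ ?_ ?_ ?_ ?_ ?_ hx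
      · rintro y ⟨r, hr, rfl⟩
        rcases Finset.mem_insert.1 hr with rfl | hr
        · exact ⟨0, zero_mem _, 1, one_mem _, by ring⟩
        · exact ⟨Real.sqrt r, Subfield.subset_closure ⟨r, hr, rfl⟩, 0, zero_mem _, by ring⟩
      · exact ⟨1, one_mem _, 0, zero_mem _, by ring⟩
      · rintro y z - - ⟨a, ha, b, hb, rfl⟩ ⟨a', ha', b', hb', rfl⟩
        exact ⟨a + a', add_mem ha ha', b + b', add_mem hb hb', by ring⟩
      · rintro y - ⟨a, ha, b, hb, rfl⟩
        exact ⟨-a, neg_mem ha, -b, neg_mem hb, by ring⟩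
      · rintro y - ⟨a, ha, b, hb, rfl⟩
        by_cases hb0 : b = 0
        · exact ⟨a⁻¹, inv_mem ha, 0, zero_mem _, by simp [hb0]⟩
        · have hd : a ^ 2 - b ^ 2 * q ≠ 0 := by
            intro hd
            apply hqF
            have hab : ((a / b) ^ 2 : ℝ) = (q:ℝ) := by
              field_simp
              linarith [hd]
            have : Real.sqrt q = |a / b| := by
              rw [← hab, Real.sqrt_sq_eq_abs]
            rw [this]
            rcases abs_choice (a / b) with h | h <;> rw [h]
            · exact div_mem ha hb
            · exact neg_mem (div_mem ha hb)
          have hinv : (a + b * Real.sqrt q)⁻¹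
              = a / (a ^ 2 - b ^ 2 * q) + (-b / (a ^ 2 - b ^ 2 * q)) * Real.sqrt q := by
            refine inv_eq_of_mul_eq_one_right ?_
            field_simp
            linear_combination (-b ^ 2) * hqq
          exact ⟨a / (a ^ 2 - b ^ 2 * q), div_mem ha (sub_mem (pow_mem ha 2)
              (mul_mem (pow_mem hb 2) (natCast_mem (sqF s) q))),
            -b / (a ^ 2 - b ^ 2 * q), div_mem (neg_mem hb) (sub_mem (pow_mem ha 2)
              (mul_mem (pow_mem hb 2) (natCast_mem (sqF s) q))), hinv⟩
      · rintro y z - - ⟨a, ha, b, hb, rfl⟩ ⟨a', ha', b', hb', rfl⟩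
        refine ⟨a * a' + b * b' * q, ?_, a * b' + b * a', ?_, by linear_combination b * b' * hqq⟩
        · exact add_mem (mul_mem ha ha') (mul_mem (mul_mem hb hb') (natCast_mem (sqF s) q))
        · exact add_mem (mul_mem ha hb') (mul_mem hb ha')
    obtain ⟨a, ha, b, hb, heq⟩ := decomp _ hmem
    have hpns : p ∉ s := fun h => hps (mem_insert_of_mem h)
    have hpq : p ≠ q := fun h => hps (h ▸ mem_insert_self _ _)
    have hmsq : Real.sqrt m * Real.sqrt m = (m:ℝ) := Real.mul_self_sqrt (Nat.cast_nonneg m)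
    by_cases hb0 : b = 0
    · exact ih' m hm ⟨p, hp, hpm, hpns⟩ (heq ▸ (by simpa [hb0] using ha))
    by_cases ha0 : a = 0
    · -- √m = b √q
      have hbq : Real.sqrt m = b * Real.sqrt q := by rw [heq, ha0, zero_add]
      have key : Real.sqrt (m * q : ℕ) = b * q := by
        push_cast
        rw [Real.sqrt_mul (Nat.cast_nonneg m), hbq]
        rw [mul_assoc, hqq]
      by_cases hqm : q ∣ m
      · obtain ⟨m', rfl⟩ := hqm
        have hm' : Squarefree m' := hm.squarefree_of_dvd ⟨q, mul_comm q m'⟩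
        have hm'F : Real.sqrt m' = b := by
          have : ((q * m' * q : ℕ) : ℝ) = (q:ℝ)^2 * (m' : ℝ) := by push_cast; ring
          rw [this, Real.sqrt_mul (sq_nonneg _), Real.sqrt_sq hq0] at key
          have hq0' : (0:ℝ) < q := by exact_mod_cast hq.pos
          rw [mul_comm ((q:ℝ)) (Real.sqrt m')] at key
          exact mul_right_cancel₀ (ne_of_gt hq0') key
        have hpm' : p ∣ m' := by
          rcases (Nat.Prime.dvd_mul hp).1 hpm with h | h
          · exact absurd ((Nat.prime_dvd_prime_iff_eq hp hq).1 h) hpq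
          · exact h
        exact ih' m' hm' ⟨p, hp, hpm', hpns⟩ (hm'F ▸ hb)
      · have hcop : Nat.Coprime m q := ((hq.coprime_iff_not_dvd).2 hqm).symm
        have hmq : Squarefree (m * q) := (Nat.squarefree_mul hcop).2 ⟨hm, hq.squarefree⟩
        exact ih' (m * q) hmq ⟨p, hp, dvd_mul_of_dvd_left hpm q, hpns⟩
          (key ▸ mul_mem hb (natCast_mem (sqF s) q))
    · -- a ≠ 0, b ≠ 0 : √q ∈ sqF s, contradiction
      apply hqF
      have hsq : (2 * a * b) * Real.sqrt q = (m:ℝ) - a ^ 2 - b ^ 2 * q := by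
        have h2 : (m:ℝ) = (a + b * Real.sqrt q) * (a + b * Real.sqrt q) := by
          rw [← hmsq, heq]
        linear_combination -h2 - b ^ 2 * hqq
      have h2ab : (2 * a * b) ≠ 0 := mul_ne_zero (mul_ne_zero two_ne_zero ha0) hb0
      have : Real.sqrt q = ((m:ℝ) - a ^ 2 - b ^ 2 * q) / (2 * a * b) := by
        rw [eq_div_iff h2ab]
        linear_combination hsq
      rw [this]
      exact div_mem (sub_mem (sub_mem (natCast_mem (sqF s) m) (pow_mem ha 2))
        (mul_mem (pow_mem hb 2) (natCast_mem (sqF s) q)))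
        (mul_mem (mul_mem (ofNat_mem (sqF s) 2) ha) hb)

lemma no_sqrt_rel : ∀ (N : ℕ) (t : Finset ℕ), t.card ≤ N →
    (∀ m ∈ t, Squarefree m) → ∀ c : ℕ → ℚ, (∀ m ∈ t, c m ≠ 0) →
    ∑ m ∈ t, (c m : ℝ) * Real.sqrt m = 0 → t = ∅ := by
  intro N
  induction N with
  | zero => intro t ht _ _ _ _; exact Finset.card_eq_zero.1 (Nat.le_zero.1 ht)
  | succ N ih =>
    intro t hcard hsf c hc hsum
    by_contra hne
    obtain ⟨m₀, hm₀⟩ := Finset.nonempty_iff_ne_empty.2 hne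
    by_cases h1 : t.card ≤ 1
    · -- singleton
      have : t = {m₀} := Finset.eq_singleton_iff_unique_mem.2 ⟨hm₀, fun y hy => by
        by_contra hne'
        exact absurd (Finset.one_lt_card.2 ⟨y, hy, m₀, hm₀, hne'⟩) (not_lt.2 h1)⟩
      rw [this, Finset.sum_singleton] at hsum
      have hpos : (0:ℝ) < Real.sqrt m₀ :=
        Real.sqrt_pos.2 (by exact_mod_cast (hsf m₀ hm₀).ne_zero.bot_lt)
      have : (c m₀ : ℝ) = 0 := by
        rcases mul_eq_zero.1 hsum with h | h
        · exact h
        · exact absurd h (ne_of_gt hpos)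
      exact hc m₀ hm₀ (by exact_mod_cast this)
    · push_neg at h1
      obtain ⟨m₁, hm₁, m₂, hm₂, hne12⟩ := Finset.one_lt_card.1 h1
      have hsf1 := hsf m₁ hm₁
      have hsf2 := hsf m₂ hm₂
      -- find a prime dividing exactly one of m₁, m₂
      have hfac : m₁.primeFactors ≠ m₂.primeFactors := by
        intro h
        exact hne12 (by
          rw [← Nat.prod_primeFactors_of_squarefree hsf1, h,
            Nat.prod_primeFactors_of_squarefree hsf2])
      obtain ⟨p, hp, hdiv, hndiv⟩ :
          ∃ p : ℕ, p.Prime ∧ (∃ m ∈ t, p ∣ m) ∧ (∃ m ∈ t, ¬ p ∣ m) := by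
        have : ∃ p, ¬ (p ∈ m₁.primeFactors ↔ p ∈ m₂.primeFactors) := by
          by_contra hcon
          push_neg at hcon
          exact hfac (Finset.ext fun p => hcon p)
        obtain ⟨p, hpiff⟩ := this
        rcases Decidable.not_iff.1 hpiff with ⟨h⟩
        by_cases h1 : p ∈ m₁.primeFactors
        · have h2 : p ∉ m₂.primeFactors := by tauto
          exact ⟨p, Nat.prime_of_mem_primeFactors h1, ⟨m₁, hm₁, Nat.dvd_of_mem_primeFactors h1⟩,
            ⟨m₂, hm₂, fun hd => h2 (Nat.mem_primeFactors.2 ⟨Nat.prime_of_mem_primeFactors h1, hd, hsf2.ne_zero⟩)⟩⟩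
        · have h2 : p ∈ m₂.primeFactors := by tauto
          exact ⟨p, Nat.prime_of_mem_primeFactors h2, ⟨m₂, hm₂, Nat.dvd_of_mem_primeFactors h2⟩,
            ⟨m₁, hm₁, fun hd => h1 (Nat.mem_primeFactors.2 ⟨Nat.prime_of_mem_primeFactors h2, hd, hsf1.ne_zero⟩)⟩⟩
      classical
      set tP := t.filter (fun m => p ∣ m) with htP
      set tZ := t.filter (fun m => ¬ p ∣ m) with htZ
      have hplus : tP.Nonempty := by obtain ⟨m, hm, hd⟩ := hdiv; exact ⟨m, Finset.mem_filter.2 ⟨hm, hd⟩⟩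
      have hzero : tZ.Nonempty := by obtain ⟨m, hm, hd⟩ := hndiv; exact ⟨m, Finset.mem_filter.2 ⟨hm, hd⟩⟩
      set s := ((∏ m ∈ t, m).primeFactors).erase p with hsdef
      have hs : ∀ r ∈ s, Nat.Prime r := fun r hr =>
        Nat.prime_of_mem_primeFactors (Finset.mem_of_mem_erase hr)
      have hps : p ∉ s := Finset.notMem_erase _ _
      have hprod0 : (∏ m ∈ t, m) ≠ 0 :=
        Finset.prod_ne_zero_iff.2 fun m hm => (hsf m hm).ne_zero
      have hsub : ∀ m ∈ t, ∀ r : ℕ, r ∣ m → r.Prime → r ≠ p → r ∈ s := by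
        intro m hm r hrm hr hrp
        exact Finset.mem_erase.2 ⟨hrp,
          Nat.mem_primeFactors.2 ⟨hr, hrm.trans (Finset.dvd_prod_of_mem _ hm), hprod0⟩⟩
      -- A ∈ sqF s
      have hA : (∑ m ∈ tZ, (c m : ℝ) * Real.sqrt m) ∈ sqF s := by
        refine sum_mem fun m hm => ?_
        obtain ⟨hmt, hpm⟩ := Finset.mem_filter.1 hm
        refine mul_mem (SubfieldClass.ratCast_mem _ _) (sqrt_mem_sqF (hsf m hmt) ?_)
        intro r hr
        refine hsub m hmt r (Nat.dvd_of_mem_primeFactors hr) (Nat.prime_of_mem_primeFactors hr) ?_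
        rintro rfl
        exact hpm (Nat.dvd_of_mem_primeFactors hr)
      have hB : (∑ m ∈ tP, (c m : ℝ) * Real.sqrt ((m / p : ℕ))) ∈ sqF s := by
        refine sum_mem fun m hm => ?_
        obtain ⟨hmt, hpm⟩ := Finset.mem_filter.1 hm
        have hmp : Squarefree (m / p) := (hsf m hmt).squarefree_of_dvd (Nat.div_dvd_of_dvd hpm)
        refine mul_mem (SubfieldClass.ratCast_mem _ _) (sqrt_mem_sqF hmp ?_)
        intro r hr
        have hrd : r ∣ m / p := Nat.dvd_of_mem_primeFactors hr
        refine hsub m hmt r (hrd.trans (Nat.div_dvd_of_dvd hpm)) (Nat.prime_of_mem_primeFactors hr) ?_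
        rintro rfl
        obtain ⟨k, hk⟩ := hrd
        have hrr : r * r ∣ m := by
          rw [← Nat.div_mul_cancel hpm, hk]
          exact ⟨k, by ring⟩
        exact hp.one_lt.ne' (Nat.isUnit_iff.1 ((hsf m hmt) r hrr))
      -- decompose the sum
      have hsplit : (∑ m ∈ tZ, (c m : ℝ) * Real.sqrt m)
          + (∑ m ∈ tP, (c m : ℝ) * Real.sqrt ((m / p : ℕ))) * Real.sqrt p = 0 := by
        rw [← hsum, ← Finset.sum_filter_add_sum_filter_not t (fun m => p ∣ m)]
        rw [add_comm, Finset.sum_mul]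
        congr 1
        refine Finset.sum_congr rfl fun m hm => ?_
        obtain ⟨hmt, hpm⟩ := Finset.mem_filter.1 hm
        rw [mul_assoc, ← Real.sqrt_mul (Nat.cast_nonneg _)]
        congr 2
        rw [← Nat.cast_mul, Nat.div_mul_cancel hpm]
      by_cases hBz : (∑ m ∈ tP, (c m : ℝ) * Real.sqrt ((m / p : ℕ))) = 0
      · have hAz : (∑ m ∈ tZ, (c m : ℝ) * Real.sqrt m) = 0 := by
          rw [hBz, zero_mul, add_zero] at hsplit; exact hsplit
        have hcard₀ : tZ.card ≤ N := by
          have hss : tZ ⊂ t := by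
            obtain ⟨m, hm⟩ := hplus
            obtain ⟨hmt, hpm⟩ := Finset.mem_filter.1 hm
            exact (Finset.ssubset_iff_of_subset (Finset.filter_subset _ _)).2
              ⟨m, hmt, fun hmem => (Finset.mem_filter.1 hmem).2 hpm⟩
          have := Finset.card_lt_card hss
          omega
        have : tZ = ∅ := ih tZ hcard₀ (fun m hm => hsf m (Finset.mem_filter.1 hm).1) c
          (fun m hm => hc m (Finset.mem_filter.1 hm).1) hAz
        exact absurd this (Finset.nonempty_iff_ne_empty.1 hzero)
      · have : Real.sqrt p = (-(∑ m ∈ tZ, (c m : ℝ) * Real.sqrt m))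
            / (∑ m ∈ tP, (c m : ℝ) * Real.sqrt ((m / p : ℕ))) := by
          rw [eq_div_iff hBz]
          linear_combination hsplit
        exact sqrt_notMem_sqF s hs p hp.squarefree ⟨p, hp, dvd_refl p, hps⟩
          (this ▸ div_mem (neg_mem hA) hB)

/-- Besicovitch: square roots of distinct square-free positive integers are
linearly independent over ℚ. -/
theorem sqrt_linearIndependent_of_squarefree
    (n : ℕ) (a : Fin n → ℕ) (ha : ∀ i, 0 < a i) (hsf : ∀ i, Squarefree (a i))
    (hinj : Function.Injective a) (x : Fin n → ℚ)
    (h : ∑ i, (x i : ℝ) * Real.sqrt (a i) = 0) : ∀ i, x i = 0 := by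
  classical
  set c : ℕ → ℚ := fun m => ∑ i ∈ Finset.univ.filter (fun j => a j = m), x i with hc
  have hca : ∀ i, c (a i) = x i := by
    intro i
    have : Finset.univ.filter (fun j => a j = a i) = {i} := by
      ext j; simp [hinj.eq_iff]
    rw [hc]; simp only [this, Finset.sum_singleton]
  set t := (Finset.image a Finset.univ).filter (fun m => c m ≠ 0) with htdef
  have hsum : ∑ m ∈ t, (c m : ℝ) * Real.sqrt m = 0 := by
    rw [htdef, Finset.sum_filter_of_ne (fun m _ hne => by
      intro hcm; exact hne (by rw [hcm]; simp))]
    rw [Finset.sum_image (fun i _ j _ hij => hinj hij)]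
    rw [← h]
    exact Finset.sum_congr rfl fun i _ => by rw [hca]
  have ht : t = ∅ := by
    refine no_sqrt_rel t.card t le_rfl ?_ c ?_ hsum
    · intro m hm
      obtain ⟨i, -, rfl⟩ := Finset.mem_image.1 (Finset.mem_filter.1 hm).1
      exact hsf i
    · exact fun m hm => (Finset.mem_filter.1 hm).2
  intro i
  by_contra hxi
  have : a i ∈ t := Finset.mem_filter.2 ⟨Finset.mem_image.2 ⟨i, Finset.mem_univ i, rfl⟩,
    by rw [hca]; exact hxi⟩
  rw [ht] at this
  exact absurd this (Finset.notMem_empty _)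
end

section
/- Let $a_1,\dots,a_n$ be positive integers and $x_1,\dots,x_n$ integers such that $E = \sum_{i=1}^n x_i \sqrt{a_i} \neq 0$. Then $|E| \geq \left(n \cdot \max_i (|x_i| \sqrt{a_i})\right)^{-(2^n - 1)}$, provided $n \geq 1$ and $\max_i(|x_i|\sqrt{a_i}) \geq 1$. -/
open MvPolynomial Finset

noncomputable def tau {n : ℕ} (j : Fin n) : Fin n → MvPolynomial (Fin n) ℤ :=
  fun i => if i = j then -X j else X i

lemma coeff_aeval_tau {n : ℕ} (j : Fin n) (p : MvPolynomial (Fin n) ℤ) (m : Fin n →₀ ℕ) :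
    coeff m (aeval (tau j) p) = (-1) ^ (m j) * coeff m p := by
  induction p using MvPolynomial.induction_on generalizing m with
  | C c =>
      rw [aeval_C, MvPolynomial.algebraMap_eq]
      rcases eq_or_ne m 0 with rfl | h
      · simp
      · rw [coeff_C, if_neg (Ne.symm h), mul_zero]
  | add p q hp hq => simp only [map_add, coeff_add, hp, hq]; ring
  | mul_X p i hp =>
      rw [map_mul, aeval_X]
      by_cases hij : i = j
      · subst hij
        rw [show tau i i = -X i from if_pos rfl, mul_neg, coeff_neg, coeff_mul_X',
          coeff_mul_X']
        by_cases hm : i ∈ m.support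
        · rw [if_pos hm, if_pos hm, hp]
          have h1 : ((m - Finsupp.single i 1 : Fin n →₀ ℕ)) i = m i - 1 := by
            simp [Finsupp.tsub_apply]
          rw [h1]
          have h2 : 1 ≤ m i := Nat.one_le_iff_ne_zero.mpr (Finsupp.mem_support_iff.mp hm)
          have : (-1 : ℤ) ^ (m i) = -(-1) ^ (m i - 1) := by
            conv_lhs => rw [show m i = (m i - 1) + 1 by omega]
            rw [pow_succ]
            ring
          rw [this]; ring
        · rw [if_neg hm, if_neg hm]; ring
      · rw [show tau j i = X i from if_neg hij, coeff_mul_X', coeff_mul_X']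
        by_cases hm : i ∈ m.support
        · rw [if_pos hm, if_pos hm, hp]
          have h1 : ((m - Finsupp.single i 1 : Fin n →₀ ℕ)) j = m j := by
            rw [Finsupp.tsub_apply, Finsupp.single_apply, if_neg hij]
            simp
          rw [h1]
        · rw [if_neg hm, if_neg hm]; ring

lemma even_exponents {n : ℕ} (p : MvPolynomial (Fin n) ℤ)
    (h : ∀ j, aeval (tau j) p = p) (m : Fin n →₀ ℕ) (hm : coeff m p ≠ 0) (j : Fin n) :
    Even (m j) := by
  rcases Nat.even_or_odd (m j) with he | ho
  · exact he
  exfalso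
  have h2 := coeff_aeval_tau j p m
  rw [h j, ho.neg_one_pow] at h2
  apply hm
  linarith

noncomputable def conjPoly {n : ℕ} (s : Finset (Fin n)) (x : Fin n → ℤ) (T : Finset (Fin n)) :
    MvPolynomial (Fin n) ℤ :=
  ∑ i ∈ s, C ((if i ∈ T then -1 else 1) * x i) * X i

lemma aeval_tau_conjPoly {n : ℕ} (s : Finset (Fin n)) (x : Fin n → ℤ) (T : Finset (Fin n))
    (j : Fin n) (hj : j ∈ s) :
    aeval (tau j) (conjPoly s x T) = conjPoly s x (symmDiff T {j}) := by
  unfold conjPoly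
  rw [map_sum]
  refine Finset.sum_congr rfl fun i hi => ?_
  rw [map_mul, aeval_C, aeval_X, MvPolynomial.algebraMap_eq]
  by_cases hij : i = j
  · subst hij
    rw [show tau i i = -X i from if_pos rfl]
    have hsign : (if i ∈ symmDiff T {i} then (-1:ℤ) else 1) = -(if i ∈ T then -1 else 1) := by
      by_cases hT : i ∈ T <;> simp [Finset.mem_symmDiff, hT]
    rw [hsign, neg_mul, C_neg]
    ring
  · rw [show tau j i = X i from if_neg hij]
    simp [Finset.mem_symmDiff, hij]

lemma aeval_tau_conjPoly' {n : ℕ} (s : Finset (Fin n)) (x : Fin n → ℤ) (T : Finset (Fin n))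
    (j : Fin n) (hj : j ∉ s) :
    aeval (tau j) (conjPoly s x T) = conjPoly s x T := by
  unfold conjPoly
  rw [map_sum]
  refine Finset.sum_congr rfl fun i hi => ?_
  have hij : i ≠ j := fun h => hj (h ▸ hi)
  rw [map_mul, aeval_C, aeval_X, MvPolynomial.algebraMap_eq,
    show tau j i = X i from if_neg hij]

lemma aeval_tau_prod {n : ℕ} (s : Finset (Fin n)) (x : Fin n → ℤ) (j : Fin n) :
    aeval (tau j) (∏ T ∈ s.powerset, conjPoly s x T) = ∏ T ∈ s.powerset, conjPoly s x T := by
  rw [map_prod]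
  by_cases hj : j ∈ s
  · rw [Finset.prod_congr rfl (fun T _ => aeval_tau_conjPoly s x T j hj)]
    refine Finset.prod_bij' (i := fun T _ => symmDiff T {j}) (j := fun T _ => symmDiff T {j})
      ?_ ?_ ?_ ?_ ?_
    · intro T hT
      rw [Finset.mem_powerset] at *
      intro i hi
      rcases Finset.mem_symmDiff.mp hi with ⟨h1, _⟩ | ⟨h1, _⟩
      · exact hT h1
      · rwa [Finset.mem_singleton.mp h1]
    · intro T hT
      rw [Finset.mem_powerset] at *
      intro i hi
      rcases Finset.mem_symmDiff.mp hi with ⟨h1, _⟩ | ⟨h1, _⟩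
      · exact hT h1
      · rwa [Finset.mem_singleton.mp h1]
    · intro T _; exact symmDiff_symmDiff_cancel_right _ _
    · intro T _; exact symmDiff_symmDiff_cancel_right _ _
    · intro T _; rfl
  · exact Finset.prod_congr rfl (fun T _ => aeval_tau_conjPoly' s x T j hj)

lemma prod_conj_int {n : ℕ} (s : Finset (Fin n)) (a : Fin n → ℕ) (x : Fin n → ℤ) :
    ∃ k : ℤ, (∏ T ∈ s.powerset, ∑ i ∈ s,
      (if i ∈ T then (-1:ℝ) else 1) * (x i : ℝ) * Real.sqrt (a i)) = (k : ℝ) := by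
  classical
  set Q := ∏ T ∈ s.powerset, conjPoly s x T with hQ
  have heval : aeval (fun i => Real.sqrt (a i)) Q = ∏ T ∈ s.powerset, ∑ i ∈ s,
      (if i ∈ T then (-1:ℝ) else 1) * (x i : ℝ) * Real.sqrt (a i) := by
    rw [map_prod]
    refine Finset.prod_congr rfl fun T _ => ?_
    rw [conjPoly, map_sum]
    refine Finset.sum_congr rfl fun i _ => ?_
    rw [map_mul, aeval_C, aeval_X]
    simp only [algebraMap_int_eq, eq_intCast]
    split_ifs <;> push_cast <;> ring
  have heven : ∀ m ∈ Q.support, ∀ j, Even (m j) := fun m hm j =>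
    even_exponents Q (aeval_tau_prod s x) m (MvPolynomial.mem_support_iff.mp hm) j
  refine ⟨∑ m ∈ Q.support, coeff m Q * ∏ i ∈ m.support, (a i : ℤ) ^ (m i / 2), ?_⟩
  rw [← heval, aeval_def, eval₂_eq]
  push_cast
  refine Finset.sum_congr rfl fun m hm => ?_
  congr 1
  refine Finset.prod_congr rfl fun i _ => ?_
  obtain ⟨t, ht⟩ := heven m hm i
  rw [ht, show t + t = 2 * t by ring, pow_mul, Real.sq_sqrt (by positivity),
    show 2 * t / 2 = t by omega]

lemma zpow_neg_two_pow (c : ℕ) (D : ℝ) :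
    D ^ (-(2 ^ c - 1) : ℤ) = (D ^ (2 ^ c - 1 : ℕ))⁻¹ := by
  have h : ((2 ^ c - 1 : ℕ) : ℤ) = (2 ^ c - 1 : ℤ) := by
    rw [Nat.cast_sub (Nat.one_le_two_pow)]
    push_cast
    ring
  rw [← h, zpow_neg, zpow_natCast]

lemma key_bound {n : ℕ} (a : Fin n → ℕ) (ha : ∀ i, 0 < a i) (x : Fin n → ℤ) (B : ℝ)
    (hB : 1 ≤ B) (N : ℕ) :
    ∀ s : Finset (Fin n), s.card ≤ N → (∀ i ∈ s, |(x i : ℝ)| * Real.sqrt (a i) ≤ B) →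
    (∑ i ∈ s, (x i : ℝ) * Real.sqrt (a i)) ≠ 0 →
    ((s.card : ℝ) * B) ^ (-(2 ^ s.card - 1) : ℤ) ≤ |∑ i ∈ s, (x i : ℝ) * Real.sqrt (a i)| := by
  induction N with
  | zero =>
    intro s hcard hxB hE
    rw [Finset.card_eq_zero.mp (Nat.le_zero.mp hcard)] at hE
    simp at hE
  | succ N ih =>
    intro s hcard hxB hE
    set E := ∑ i ∈ s, (x i : ℝ) * Real.sqrt (a i) with hEdef
    set S : Finset (Fin n) → ℝ :=
      fun T => ∑ i ∈ s, (if i ∈ T then (-1:ℝ) else 1) * (x i : ℝ) * Real.sqrt (a i) with hSdef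
    have hS0 : S ∅ = E := by
      simp [hSdef, hEdef]
    have hs0 : s.Nonempty := by
      rcases s.eq_empty_or_nonempty with rfl | h
      · simp [hEdef] at hE
      · exact h
    have hc1 : 1 ≤ s.card := Finset.card_pos.mpr hs0
    have hc1R : (1:ℝ) ≤ (s.card : ℝ) := by exact_mod_cast hc1
    have hcB : (1:ℝ) ≤ (s.card : ℝ) * B := by nlinarith
    have hpos : (0:ℝ) < (s.card : ℝ) * B := lt_of_lt_of_le one_pos hcB
    have hSb : ∀ T : Finset (Fin n), |S T| ≤ (s.card : ℝ) * B := by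
      intro T
      calc |S T| ≤ ∑ i ∈ s, |(if i ∈ T then (-1:ℝ) else 1) * (x i : ℝ) * Real.sqrt (a i)| :=
            Finset.abs_sum_le_sum_abs _ _
        _ ≤ ∑ _i ∈ s, B := by
            refine Finset.sum_le_sum fun i hi => ?_
            have h1 : |(if i ∈ T then (-1:ℝ) else 1) * (x i : ℝ) * Real.sqrt (a i)|
                = |(x i : ℝ)| * Real.sqrt (a i) := by
              rw [abs_mul, abs_mul]
              rw [abs_of_nonneg (Real.sqrt_nonneg _)]
              split_ifs <;> simp
            rw [h1]
            exact hxB i hi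
        _ = (s.card : ℝ) * B := by rw [Finset.sum_const, nsmul_eq_mul]
    by_cases hall : ∀ T ∈ s.powerset, S T ≠ 0
    · -- all conjugates nonzero: integrality argument
      obtain ⟨k, hk⟩ := prod_conj_int s a x
      have hPk : ∏ T ∈ s.powerset, S T = (k : ℝ) := hk
      have hPne : (∏ T ∈ s.powerset, S T) ≠ 0 := Finset.prod_ne_zero_iff.mpr hall
      have hkne : k ≠ 0 := by
        intro h
        rw [h] at hPk
        exact hPne (by simpa using hPk)
      have hP1 : (1:ℝ) ≤ |∏ T ∈ s.powerset, S T| := by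
        rw [hPk]
        rw [← Int.cast_abs]
        exact_mod_cast Int.one_le_abs hkne
      have hsplit : ∏ T ∈ s.powerset, S T = S ∅ * ∏ T ∈ s.powerset.erase ∅, S T :=
        (Finset.mul_prod_erase _ _ (Finset.empty_mem_powerset s)).symm
      have hprod_bound : |∏ T ∈ s.powerset.erase ∅, S T| ≤ ((s.card : ℝ) * B) ^ (2 ^ s.card - 1 : ℕ) := by
        rw [Finset.abs_prod]
        calc ∏ T ∈ s.powerset.erase ∅, |S T| ≤ ∏ _T ∈ s.powerset.erase ∅, ((s.card : ℝ) * B) :=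
              Finset.prod_le_prod (fun _ _ => abs_nonneg _) (fun T _ => hSb T)
          _ = ((s.card : ℝ) * B) ^ (2 ^ s.card - 1 : ℕ) := by
              rw [Finset.prod_const, Finset.card_erase_of_mem (Finset.empty_mem_powerset s),
                Finset.card_powerset]
      have h1 : (1:ℝ) ≤ |E| * ((s.card : ℝ) * B) ^ (2 ^ s.card - 1 : ℕ) := by
        calc (1:ℝ) ≤ |∏ T ∈ s.powerset, S T| := hP1
          _ = |S ∅| * |∏ T ∈ s.powerset.erase ∅, S T| := by rw [hsplit, abs_mul]
          _ ≤ |E| * ((s.card : ℝ) * B) ^ (2 ^ s.card - 1 : ℕ) := by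
              rw [hS0]
              exact mul_le_mul_of_nonneg_left hprod_bound (abs_nonneg _)
      rw [zpow_neg_two_pow, inv_eq_one_div, div_le_iff₀ (by positivity)]
      linarith
    · -- some conjugate vanishes: reduce to smaller set
      push_neg at hall
      obtain ⟨T, hTs, hTzero⟩ := hall
      rw [Finset.mem_powerset] at hTs
      have hTne : T.Nonempty := by
        rcases T.eq_empty_or_nonempty with rfl | h
        · rw [hS0] at hTzero; exact absurd hTzero hE
        · exact h
      have hEsum : E = 2 * ∑ i ∈ s \ T, (x i : ℝ) * Real.sqrt (a i) := by
        have hadd : E + S T = ∑ i ∈ s,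
            ((x i : ℝ) * Real.sqrt (a i) + (if i ∈ T then (-1:ℝ) else 1) * (x i : ℝ) * Real.sqrt (a i)) := by
          rw [hEdef, hSdef, ← Finset.sum_add_distrib]
        have hsub : ∑ i ∈ s,
            ((x i : ℝ) * Real.sqrt (a i) + (if i ∈ T then (-1:ℝ) else 1) * (x i : ℝ) * Real.sqrt (a i))
            = ∑ i ∈ s \ T, 2 * ((x i : ℝ) * Real.sqrt (a i)) := by
          rw [← Finset.sum_subset (Finset.sdiff_subset)]
          · refine Finset.sum_congr rfl fun i hi => ?_
            have : i ∉ T := (Finset.mem_sdiff.mp hi).2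
            rw [if_neg this]; ring
          · intro i hi hni
            have : i ∈ T := by
              by_contra h
              exact hni (Finset.mem_sdiff.mpr ⟨hi, h⟩)
            rw [if_pos this]; ring
        have := hadd
        rw [hTzero, add_zero, hsub] at this
        rw [this, Finset.mul_sum]
      set F := ∑ i ∈ s \ T, (x i : ℝ) * Real.sqrt (a i) with hFdef
      have hFne : F ≠ 0 := by
        intro h
        rw [hEsum, h, mul_zero] at hE
        exact hE rfl
      have hmcard : (s \ T).card ≤ N := by
        have h1 := Finset.card_sdiff_of_subset hTs
        have h2 : 1 ≤ T.card := Finset.card_pos.mpr hTne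
        omega
      have hIH := ih (s \ T) hmcard (fun i hi => hxB i ((Finset.mem_sdiff.mp hi).1)) hFne
      have hm1 : 1 ≤ (s \ T).card := by
        rcases (s \ T).eq_empty_or_nonempty with h | h
        · rw [h] at hFdef; simp [hFdef] at hFne
        · exact Finset.card_pos.mpr h
      have hmle : (s \ T).card ≤ s.card := Finset.card_le_card (Finset.sdiff_subset)
      -- compare the two bounds
      have hm1R : (1:ℝ) ≤ ((s \ T).card : ℝ) := by exact_mod_cast hm1
      have hmBpos : (0:ℝ) < ((s \ T).card : ℝ) * B := by nlinarith
      have hmB1 : (1:ℝ) ≤ ((s \ T).card : ℝ) * B := by nlinarith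
      have hmBle : ((s \ T).card : ℝ) * B ≤ (s.card : ℝ) * B := by
        have : ((s \ T).card : ℝ) ≤ (s.card : ℝ) := by exact_mod_cast hmle
        nlinarith
      have hexp : (2 ^ (s \ T).card - 1 : ℕ) ≤ (2 ^ s.card - 1 : ℕ) := by
        have := Nat.pow_le_pow_right (by norm_num : 1 ≤ 2) hmle
        omega
      have hcompare : ((s.card : ℝ) * B) ^ (-(2 ^ s.card - 1) : ℤ)
          ≤ (((s \ T).card : ℝ) * B) ^ (-(2 ^ (s \ T).card - 1) : ℤ) := by
        rw [zpow_neg_two_pow, zpow_neg_two_pow]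
        apply inv_anti₀ (by positivity)
        calc (((s \ T).card : ℝ) * B) ^ (2 ^ (s \ T).card - 1 : ℕ)
            ≤ ((s.card : ℝ) * B) ^ (2 ^ (s \ T).card - 1 : ℕ) :=
              pow_le_pow_left₀ (le_of_lt hmBpos) hmBle _
          _ ≤ ((s.card : ℝ) * B) ^ (2 ^ s.card - 1 : ℕ) :=
              pow_le_pow_right₀ hcB hexp
      calc ((s.card : ℝ) * B) ^ (-(2 ^ s.card - 1) : ℤ)
          ≤ (((s \ T).card : ℝ) * B) ^ (-(2 ^ (s \ T).card - 1) : ℤ) := hcompare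
        _ ≤ |F| := hIH
        _ ≤ 2 * |F| := by nlinarith [abs_nonneg F]
        _ = |E| := by rw [hEsum, abs_mul]; norm_num

/-- Burnikel et al. separation bound for sums of square roots. -/
theorem burnikel_separation_bound
    (n : ℕ) (hn : 1 ≤ n) (a : Fin n → ℕ) (ha : ∀ i, 0 < a i) (x : Fin n → ℤ)
    (hne : Finset.univ.Nonempty (α := Fin n))
    (hE : (∑ i, (x i : ℝ) * Real.sqrt (a i)) ≠ 0)
    (hM : 1 ≤ Finset.univ.sup' hne fun i => |(x i : ℝ)| * Real.sqrt (a i)) :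
    ((n : ℝ) * Finset.univ.sup' hne fun i => |(x i : ℝ)| * Real.sqrt (a i)) ^
        (-(2 ^ n - 1) : ℤ) ≤ |∑ i, (x i : ℝ) * Real.sqrt (a i)| := by
  classical
  set B := Finset.univ.sup' hne fun i => |(x i : ℝ)| * Real.sqrt (a i) with hBdef
  have hxB : ∀ i ∈ (Finset.univ : Finset (Fin n)), |(x i : ℝ)| * Real.sqrt (a i) ≤ B := by
    intro i _
    rw [hBdef]
    exact Finset.le_sup' (fun i => |(x i : ℝ)| * Real.sqrt (a i)) (Finset.mem_univ i)
  have h := key_bound a ha x B hM n Finset.univ (by simp) hxB hE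
  simpa [Finset.card_univ] using h
end

section
/- Let $a_1,\dots,a_n$ be positive integers, $x_1,\dots,x_n$ integers, and for each sign vector $y \in \{\pm 1\}^n$ define the conjugate $E_y = \sum_{i=1}^n y_i x_i \sqrt{a_i}$. Then the product $\prod_{y \in \{\pm 1\}^n} E_y$ is an integer. -/
/-!
The product `P = ∏_s ∑_i ±x_i X_i` is a polynomial with integer coefficients, and substituting
`X_j ↦ -X_j` only permutes its factors. Hence every monomial of `P` has even exponents, so
evaluating `P` at `X_i = √a_i` gives an integer.
-/

open Finset

namespace MvPolynomial

variable {σ R : Type*}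

theorem coeff_aeval_C_mul_X [CommSemiring R] (u : σ → R) (f : MvPolynomial σ R) (m : σ →₀ ℕ) :
    coeff m (aeval (fun i => C (u i) * X i) f) = (m.prod fun i k => u i ^ k) * coeff m f := by
  classical
  induction f using MvPolynomial.induction_on' with
  | monomial d a =>
    have hmonomial : aeval (fun i => C (u i) * X i) (monomial d a) =
        monomial d (a * d.prod fun i k => u i ^ k) := by
      rw [aeval_monomial, monomial_eq, C_mul, map_finsuppProd]
      simp only [mul_pow, Finsupp.prod_mul, map_pow, algebraMap_eq, mul_assoc]
    rw [hmonomial, coeff_monomial, coeff_monomial]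
    split_ifs with h
    · rw [h, mul_comm]
    · rw [mul_zero]
  | add p q hp hq => rw [map_add, coeff_add, coeff_add, hp, hq, mul_add]

theorem aeval_mem_bot_of_even_exponents {S : Type*} [CommSemiring R] [CommSemiring S]
    [Algebra R S] (f : MvPolynomial σ R) (hf : ∀ m ∈ f.support, ∀ i, Even (m i)) (r : σ → S)
    (hr : ∀ i, r i ^ 2 ∈ (⊥ : Subalgebra R S)) : aeval r f ∈ (⊥ : Subalgebra R S) := by
  rw [f.as_sum, map_sum]
  refine Subalgebra.sum_mem _ fun m hm => ?_
  rw [aeval_monomial]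
  refine Subalgebra.mul_mem _ (Subalgebra.algebraMap_mem _ _)
    (Subalgebra.prod_mem _ fun i _ => ?_)
  obtain ⟨k, hk⟩ := (hf m hm i).two_dvd
  show r i ^ m i ∈ _
  rw [hk, pow_mul]
  exact Subalgebra.pow_mem _ (hr i) k

variable [CommRing R] [DecidableEq σ]

noncomputable def negX (j : σ) : MvPolynomial σ R →ₐ[R] MvPolynomial σ R :=
  aeval fun i => C (if i = j then -1 else 1) * X i

variable [Fintype σ]

theorem coeff_negX (j : σ) (f : MvPolynomial σ R) (m : σ →₀ ℕ) :
    coeff m (negX j f) = (-1) ^ m j * coeff m f := by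
  rw [negX, coeff_aeval_C_mul_X, Finsupp.prod_pow]
  simp only [ite_pow, one_pow, Fintype.prod_ite_eq']

theorem even_of_negX_eq_self [IsAddTorsionFree R] {j : σ} {f : MvPolynomial σ R}
    (hf : negX j f = f) {m : σ →₀ ℕ} (hm : m ∈ f.support) : Even (m j) := by
  by_contra hodd
  have hneg : coeff m f = -coeff m f := by
    conv_lhs => rw [← hf]
    rw [coeff_negX, (Nat.not_even_iff_odd.mp hodd).neg_one_pow, neg_one_mul]
  exact mem_support_iff.mp hm (self_eq_neg.mp hneg)

noncomputable def signedSum (x : σ → R) (s : σ → Bool) : MvPolynomial σ R :=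
  ∑ i, (if s i then 1 else -1) * C (x i) * X i

noncomputable def prodSignedSum (x : σ → R) : MvPolynomial σ R :=
  ∏ s : σ → Bool, signedSum x s

theorem negX_signedSum (j : σ) (x : σ → R) (s : σ → Bool) :
    negX j (signedSum x s) = signedSum x (Function.update s j (!s j)) := by
  simp only [signedSum, negX, map_sum, map_mul, apply_ite, map_one, map_neg, aeval_C, aeval_X,
    algebraMap_eq]
  refine sum_congr rfl fun i _ => ?_
  rcases eq_or_ne i j with rfl | hij
  · cases s i <;> simp
  · simp [hij]

theorem negX_prodSignedSum (j : σ) (x : σ → R) : negX j (prodSignedSum x) = prodSignedSum x := by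
  have hflip : Function.Involutive fun s : σ → Bool => Function.update s j (!s j) := fun s => by
    simp
  simp only [prodSignedSum, map_prod, negX_signedSum]
  exact Equiv.prod_comp hflip.toPerm (signedSum x)

end MvPolynomial

open MvPolynomial in
theorem prod_conjugates_is_integer_general
    (n : ℕ) (a : Fin n → ℕ) (x : Fin n → ℤ) :
    ∃ k : ℤ, (∏ s : Fin n → Bool,
        ∑ i, ((if s i then (1 : ℝ) else -1) * (x i : ℝ) * Real.sqrt (a i))) = (k : ℝ) := by
  have hmem : aeval (fun i => Real.sqrt (a i)) (prodSignedSum x) ∈ (⊥ : Subalgebra ℤ ℝ) :=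
    aeval_mem_bot_of_even_exponents _
      (fun m hm j => even_of_negX_eq_self (negX_prodSignedSum j x) hm) _
      fun i => by rw [Real.sq_sqrt (Nat.cast_nonneg _)]; exact Subalgebra.natCast_mem _ _
  obtain ⟨k, hk⟩ := Algebra.mem_bot.mp hmem
  refine ⟨k, ?_⟩
  rw [← eq_intCast (algebraMap ℤ ℝ), hk]
  simp only [prodSignedSum, signedSum, map_prod, map_sum, map_mul, apply_ite, map_one, map_neg,
    aeval_C, aeval_X, algebraMap_int_eq, Int.coe_castRingHom]

/-- The product of all sign-conjugates of a sum of square roots is an integer. -/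
theorem prod_conjugates_is_integer
    (n : ℕ) (a : Fin n → ℕ) (ha : ∀ i, 0 < a i) (x : Fin n → ℤ) :
    ∃ k : ℤ, (∏ s : Fin n → Bool,
        ∑ i, ((if s i then (1 : ℝ) else -1) * (x i : ℝ) * Real.sqrt (a i))) = (k : ℝ) :=
  prod_conjugates_is_integer_general n a x
end

section
/- Let $a$ be a positive integer that is not a perfect square, and let $q$ be a positive integer. Then the distance from $q\sqrt{a}$ to the nearest integer satisfies $\mathrm{dist}_{\mathbb{Z}}(q\sqrt{a}) \geq \frac{1}{q(2\sqrt{a}+1)}$. -/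
/-- Distance of a real number to the nearest integer. -/
noncomputable def distZ (x : ℝ) : ℝ := |x - round x|

/-- Lower bound for the distance of `q√a` to the integers when `a` is not a
perfect square. -/
theorem distZ_sqrt_lower_bound
    (a q : ℕ) (ha : 0 < a) (hns : ¬ ∃ b : ℕ, b ^ 2 = a) (hq : 0 < q) :
    1 / ((q : ℝ) * (2 * Real.sqrt a + 1)) ≤ distZ ((q : ℝ) * Real.sqrt a) := by
  have hirr : Irrational (Real.sqrt a) := by
    rw [irrational_sqrt_natCast_iff]
    rintro ⟨r, hr⟩
    exact hns ⟨r, by rw [hr]; ring⟩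
  set s := Real.sqrt a with hs
  have hs0 : 0 ≤ s := Real.sqrt_nonneg _
  have hs2 : s ^ 2 = a := Real.sq_sqrt (by positivity)
  set p : ℤ := round ((q : ℝ) * s) with hp
  have hqR : (0 : ℝ) < q := by exact_mod_cast hq
  -- q^2 a - p^2 ≠ 0
  have hne : ((q : ℤ) ^ 2 * a - p ^ 2 : ℤ) ≠ 0 := by
    intro h
    have h' : ((q : ℝ) * s) ^ 2 = (p : ℝ) ^ 2 := by
      have := congrArg (Int.cast : ℤ → ℝ) h
      push_cast at this
      nlinarith [this]
    have : (q : ℝ) * s = |(p : ℝ)| := by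
      rw [← abs_of_nonneg (mul_nonneg hqR.le hs0), ← Real.sqrt_sq_eq_abs,
        ← Real.sqrt_sq_eq_abs, h']
    have hrat : Irrational ((q : ℝ) * s) := hirr.natCast_mul hq.ne'
    rw [this, ← Int.cast_abs] at hrat
    exact Int.not_irrational _ hrat
  have h1 : (1 : ℝ) ≤ |((q : ℤ) ^ 2 * a - p ^ 2 : ℤ)| := by
    exact_mod_cast Int.one_le_abs hne
  have hfact : (|((q : ℤ) ^ 2 * a - p ^ 2 : ℤ)| : ℝ)
      = |(q : ℝ) * s - p| * |(q : ℝ) * s + p| := by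
    rw [← abs_mul]
    congr 1
    push_cast
    nlinarith [hs2]
  have hpb : |((q : ℝ) * s - p)| * |(q : ℝ) * s + p| ≥ 1 := by
    rw [← hfact]; exact_mod_cast h1
  have habs : |(q : ℝ) * s + p| ≤ (q : ℝ) * (2 * s + 1) := by
    have h2 : |(p : ℝ)| ≤ (q : ℝ) * s + 1 / 2 := by
      have := abs_sub_round ((q : ℝ) * s)
      calc |(p : ℝ)| ≤ |(p : ℝ) - (q : ℝ) * s| + |(q : ℝ) * s| := by
            have := abs_sub_abs_le_abs_sub (p : ℝ) ((q : ℝ) * s); linarith [abs_nonneg ((q:ℝ)*s)]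
        _ ≤ 1 / 2 + (q : ℝ) * s := by
            rw [abs_sub_comm, abs_of_nonneg (mul_nonneg hqR.le hs0)]; linarith
        _ = (q : ℝ) * s + 1 / 2 := by ring
    have hq1 : (1 : ℝ) ≤ q := by exact_mod_cast hq
    calc |(q : ℝ) * s + p| ≤ |(q : ℝ) * s| + |(p : ℝ)| := abs_add_le _ _
      _ ≤ (q : ℝ) * s + ((q : ℝ) * s + 1 / 2) := by
          rw [abs_of_nonneg (mul_nonneg hqR.le hs0)]; linarith
      _ ≤ (q : ℝ) * (2 * s + 1) := by nlinarith
  have hpos : (0 : ℝ) < (q : ℝ) * (2 * s + 1) := by nlinarith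
  rw [div_le_iff₀ hpos] at *
  unfold distZ
  have h3 : 0 ≤ |(q : ℝ) * s - p| := abs_nonneg _
  nlinarith [hpb, habs, h3]
end

section
/- Let $a_1, \dots, a_n$ be positive integers, $\beta_i = \sqrt{a_i}$, and $x \in \mathbb{Z}^n\setminus\{0\}$. Let $Q \geq (2n\|x\|_\infty)^{3/2}$ be a real number and let $B$ be the $(n+1)\times(n+1)$ matrix with $B_{11} = 1/Q^{n+1}$, $B_{i+1,1} = \beta_i$, $B_{i+1,i+1} = 1$ and all other entries zero. Suppose the first successive minimum (w.r.t. $\ell_\infty$) of the lattice generated by $B$ satisfies $\lambda_1 \geq 1/Q^{1 + \frac{1}{3n}}$. Then $\left|\sum_{i=1}^n x_i \sqrt{a_i}\right| \geq \frac{1}{Q^{n+1}}$. -/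
/-!
Suppose `|s| < c` where `s = ∑ xᵢ √aᵢ` and `c = 1/Q^(n+1)`, and put `N = Q^(1 + 1/(3n))`,
`M = ‖x‖∞`. The vector `d = (-s/c, x₁, …, xₙ)` is orthogonal to the first column of `B`, so
`d ⬝ B w = ∑ xₖ wₖ₊₁` is an integer for every integer vector `w`; moreover `|dᵢ| ≤ M`, with
equality at some `j ≠ 0`.

The symmetric convex body cut out by `|yᵢ| ≤ r` (`i ≠ j`), `|∑_{i ≠ j} dᵢ yᵢ| ≤ M r` and
`|d ⬝ y| ≤ M (r + h)` has volume at least `1/n` times that of the box `|y_j| ≤ h`, `|yᵢ| ≤ r`: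
flipping the signs of the first `m` coordinates other than `j` turns `∑_{i ≠ j} dᵢ yᵢ` into
its negative in `n` steps of size at most `2 M r`, so for some `m < n` it lands in `[-M r, M r]`.
Taking `r` just below `1/N` and `h` a little above `n c / rⁿ`, Minkowski's theorem gives a
nonzero lattice point `y = B z` in the body. As `M (r + h) < 1`, the integer `d ⬝ y` vanishes,
so `|d_j y_j| ≤ M r` and `‖y‖∞ ≤ r < 1/N ≤ λ₁`, a contradiction.
-/

/-- The `k`-th successive minimum (w.r.t. the `ℓ∞`-norm, which is the norm on
`Fin n → ℝ`) of the lattice generated by the matrix `A`. -/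
noncomputable def succMin (n : ℕ) (A : Matrix (Fin n) (Fin n) ℝ) (k : ℕ) : ℝ :=
  sInf {R : ℝ | 0 < R ∧ ∃ v : Fin k → Fin n → ℤ,
    LinearIndependent ℝ (fun j => A.mulVec fun i => ((v j i : ℝ))) ∧
    ∀ j, ‖A.mulVec fun i => ((v j i : ℝ))‖ ≤ R}

/-- The matrix `B` with first column `(c, β₁, …, βₙ)ᵀ` and identity elsewhere. -/
noncomputable def Bmat (n : ℕ) (c : ℝ) (β : Fin n → ℝ) :
    Matrix (Fin (n + 1)) (Fin (n + 1)) ℝ :=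
  Matrix.of fun i j =>
    if j = 0 then (Fin.cases c β i : ℝ) else if i = j then 1 else 0

/-- The `ℓ∞`-norm of an integer vector, as a real number. -/
noncomputable def intNormInf (n : ℕ) (x : Fin n → ℤ) : ℝ :=
  ((Finset.univ.sup fun i => (x i).natAbs : ℕ) : ℝ)

open MeasureTheory Matrix

theorem exists_abs_le_of_abs_sub_le {T : ℕ → ℝ} {θ : ℝ} {n : ℕ} (hn : n ≠ 0)
    (hT : T n = -T 0) (hstep : ∀ m < n, |T (m + 1) - T m| ≤ 2 * θ) :
    ∃ m < n, |T m| ≤ θ := by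
  wlog h0 : 0 ≤ T 0 generalizing T
  · obtain ⟨m, hm, hTm⟩ := this (T := fun m => -T m) (by simp [hT])
      (fun m hm => by simpa [abs_sub_comm, neg_add_eq_sub] using hstep m hm) (by linarith)
    exact ⟨m, hm, by simpa using hTm⟩
  by_contra! hfar
  have hpos : ∀ m < n, θ < T m := by
    intro m
    induction m with
    | zero => intro h; simpa [abs_of_nonneg h0] using hfar 0 h
    | succ m ih =>
      intro hm
      have hstep_m := abs_le.mp (hstep m (by omega))
      rcases lt_abs.mp (hfar (m + 1) hm) with h | h <;> linarith [ih (by omega)]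
  obtain ⟨m, rfl⟩ : ∃ m, n = m + 1 := Nat.exists_eq_succ_of_ne_zero hn
  have hstep_last := abs_le.mp (hstep m (by omega))
  linarith [hpos m (by omega), hpos 0 (by omega)]

theorem exists_abs_sum_ite_neg_le {n : ℕ} (hn : n ≠ 0) {g : Fin n → ℝ} {θ : ℝ}
    (hg : ∀ k, |g k| ≤ θ) :
    ∃ m < n, |∑ k : Fin n, if (k : ℕ) < m then -g k else g k| ≤ θ := by
  refine exists_abs_le_of_abs_sub_le hn ?_ fun m hm => ?_
  · simp
  · have hdiff : ∀ k : Fin n, ((if (k : ℕ) < m + 1 then -g k else g k) -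
        if (k : ℕ) < m then -g k else g k) = if k = ⟨m, hm⟩ then -2 * g k else 0 := by
      intro k
      rcases lt_trichotomy (k : ℕ) m with h | h | h
      · have hk : k ≠ ⟨m, hm⟩ := fun e => h.ne (congrArg Fin.val e)
        simp [h, Nat.lt_succ_of_lt h, hk]
      · simp [Fin.ext_iff, h]; ring
      · have hk : k ≠ ⟨m, hm⟩ := fun e => h.ne' (congrArg Fin.val e)
        rw [if_neg (by omega), if_neg (by omega), if_neg hk, sub_self]
    rw [← Finset.sum_sub_distrib, Finset.sum_congr rfl fun k _ => hdiff k]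
    simpa [abs_mul] using hg ⟨m, hm⟩

def flipSigns {ι : Type*} [DecidableEq ι] (S : Finset ι) (y : ι → ℝ) : ι → ℝ :=
  fun i => if i ∈ S then -y i else y i

theorem measurePreserving_flipSigns {ι : Type*} [Fintype ι] [DecidableEq ι] (S : Finset ι) :
    MeasurePreserving (flipSigns S) (volume : Measure (ι → ℝ)) volume := by
  refine volume_preserving_pi (α' := fun _ : ι => ℝ) (β' := fun _ => ℝ)
    (f := fun i t => if i ∈ S then -t else t) fun i => ?_
  by_cases h : i ∈ S
  · simpa [h] using Measure.measurePreserving_neg (volume : Measure ℝ)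
  · simp only [h, if_false]
    exact MeasurePreserving.id volume

theorem abs_flipSigns {ι : Type*} [DecidableEq ι] (S : Finset ι) (y : ι → ℝ) (i : ι) :
    |flipSigns S y i| = |y i| := by
  unfold flipSigns; split_ifs <;> simp

theorem isLinearMap_sum_mul_apply {ι κ : Type*} [Fintype κ] (v : κ → ℝ) (σ : κ → ι) :
    IsLinearMap ℝ fun y : ι → ℝ => ∑ k, v k * y (σ k) :=
  ⟨fun y z => by simp [mul_add, Finset.sum_add_distrib],
    fun a y => by simp [Finset.mul_sum, mul_left_comm]⟩

theorem convex_setOf_abs_le {E : Type*} [AddCommGroup E] [Module ℝ E] {f : E → ℝ}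
    (hf : IsLinearMap ℝ f) (t : ℝ) : Convex ℝ {y | |f y| ≤ t} := by
  simpa only [abs_le, Set.ofPred_and] using
    (convex_halfSpace_ge hf (-t)).inter (convex_halfSpace_le hf t)

theorem exists_mulVec_intCast_ne_zero_mem {ι : Type*} [Fintype ι] [DecidableEq ι]
    (A : Matrix ι ι ℝ) (hA : A.det ≠ 0) {K : Set (ι → ℝ)} (hsymm : ∀ y ∈ K, -y ∈ K)
    (hconv : Convex ℝ K) (hvol : ENNReal.ofReal |A.det| * 2 ^ Fintype.card ι < volume K) :
    ∃ z : ι → ℤ, A *ᵥ (fun i => (z i : ℝ)) ≠ 0 ∧ A *ᵥ (fun i => (z i : ℝ)) ∈ K := by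
  let b := (Pi.basisFun ℝ ι).map (A.toLinearEquiv' (A.invertibleOfIsUnitDet hA.isUnit))
  have hb : ∀ i, b i = A.col i := fun i => by
    ext k; simp [b, Matrix.toLinearEquiv', Matrix.mulVec_single]
  have hvolF : volume (ZSpan.fundamentalDomain b) = ENNReal.ofReal |A.det| := by
    rw [ZSpan.volume_fundamentalDomain, show Matrix.of b = Aᵀ by ext; simp [hb]]
    simp
  have : Countable (Submodule.span ℤ (Set.range b)) := inferInstance
  obtain ⟨u, hu0, huK⟩ := exists_ne_zero_mem_lattice_of_measure_mul_two_pow_lt_measure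
    (ZSpan.isAddFundamentalDomain' b volume) hsymm hconv (by simpa [hvolF] using hvol)
  obtain ⟨z, hz⟩ := (Submodule.mem_span_range_iff_exists_fun ℤ).1 u.2
  have hAz : A *ᵥ (fun i => (z i : ℝ)) = u := by
    rw [← hz]; ext k; simp [Matrix.mulVec, dotProduct, hb, mul_comm]
  exact ⟨z, hAz ▸ by simpa using hu0, hAz ▸ huK⟩

section Slab

variable {n : ℕ}

def slab (j : Fin (n + 1)) (d : Fin (n + 1) → ℝ) (M r h : ℝ) : Set (Fin (n + 1) → ℝ) :=
  {y | (∀ i ≠ j, |y i| ≤ r) ∧ |∑ k, d (j.succAbove k) * y (j.succAbove k)| ≤ M * r ∧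
    |∑ i, d i * y i| ≤ M * (r + h)}

theorem measurableSet_slab (j : Fin (n + 1)) (d : Fin (n + 1) → ℝ) (M r h : ℝ) :
    MeasurableSet (slab j d M r h) := by
  simp only [slab, Set.ofPred_and, Set.ofPred_forall]
  exact .inter (.iInter fun i => .iInter fun _ => measurableSet_le (by fun_prop) (by fun_prop))
    (.inter (measurableSet_le (by fun_prop) (by fun_prop))
      (measurableSet_le (by fun_prop) (by fun_prop)))

theorem neg_mem_slab {j : Fin (n + 1)} {d : Fin (n + 1) → ℝ} {M r h : ℝ} {y : Fin (n + 1) → ℝ}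
    (hy : y ∈ slab j d M r h) : -y ∈ slab j d M r h := by
  obtain ⟨hcoord, hmid, hfull⟩ := hy
  exact ⟨fun i hi => by simpa using hcoord i hi, by simpa [Finset.sum_neg_distrib] using hmid,
    by simpa [Finset.sum_neg_distrib] using hfull⟩

theorem convex_slab (j : Fin (n + 1)) (d : Fin (n + 1) → ℝ) (M r h : ℝ) :
    Convex ℝ (slab j d M r h) := by
  simp only [slab, Set.ofPred_and, Set.ofPred_forall]
  refine .inter (convex_iInter fun i => convex_iInter fun _ => ?_)
    (.inter (convex_setOf_abs_le (isLinearMap_sum_mul_apply _ _) _) ?_)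
  · exact convex_setOf_abs_le (LinearMap.proj (R := ℝ) (φ := fun _ => ℝ) i).isLinear r
  · exact convex_setOf_abs_le (isLinearMap_sum_mul_apply d id) _

theorem pi_Icc_subset_iUnion_preimage_flipSigns_slab (hn : n ≠ 0) (j : Fin (n + 1))
    {d : Fin (n + 1) → ℝ} {M : ℝ} (hd : ∀ i, |d i| ≤ M) (r h : ℝ) :
    Set.univ.pi (fun i => Set.Icc (-if i = j then h else r) (if i = j then h else r)) ⊆
      ⋃ m ∈ Finset.range n,
        flipSigns ((Finset.univ.filter fun k : Fin n => (k : ℕ) < m).image j.succAbove) ⁻¹'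
          slab j d M r h := by
  intro y hy
  have hbound : ∀ i, |y i| ≤ if i = j then h else r := fun i => abs_le.2 (hy i trivial)
  have hyj : |y j| ≤ h := by simpa using hbound j
  have hyr : ∀ i ≠ j, |y i| ≤ r := fun i hi => by simpa [hi] using hbound i
  have hM : 0 ≤ M := (abs_nonneg _).trans (hd j)
  set g : Fin n → ℝ := fun k => d (j.succAbove k) * y (j.succAbove k)
  obtain ⟨m, hm, hgm⟩ := exists_abs_sum_ite_neg_le hn (g := g) (θ := M * r) fun k =>
    (abs_mul _ _).trans_le
      (mul_le_mul (hd _) (hyr _ (j.succAbove_ne k)) (abs_nonneg _) hM)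
  refine Set.mem_iUnion₂.2 ⟨m, Finset.mem_range.2 hm, ?_⟩
  set S := (Finset.univ.filter fun k : Fin n => (k : ℕ) < m).image j.succAbove
  have hjS : j ∉ S := by simp [S, Fin.succAbove_ne]
  have hmid : ∑ k, d (j.succAbove k) * flipSigns S y (j.succAbove k) =
      ∑ k : Fin n, if (k : ℕ) < m then -g k else g k := by
    refine Finset.sum_congr rfl fun k _ => ?_
    by_cases hk : (k : ℕ) < m <;> simp [flipSigns, S, g, hk]
  refine ⟨fun i hi => (abs_flipSigns S y i).trans_le (hyr i hi), hmid ▸ hgm, ?_⟩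
  rw [Fin.sum_univ_succAbove _ j, hmid, flipSigns, if_neg hjS, mul_add]
  calc |d j * y j + ∑ k : Fin n, if (k : ℕ) < m then -g k else g k|
      ≤ |d j| * |y j| + M * r := by rw [← abs_mul]; exact (abs_add_le _ _).trans (by gcongr)
    _ ≤ M * h + M * r := by gcongr; exact hd j
    _ = M * r + M * h := add_comm _ _

theorem volume_pi_Icc_ite (j : Fin (n + 1)) (r h : ℝ) :
    volume (Set.univ.pi fun i => Set.Icc (-if i = j then h else r) (if i = j then h else r)) =
      ENNReal.ofReal (2 * h) * ENNReal.ofReal (2 * r) ^ n := by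
  rw [volume_pi_pi, Fin.prod_univ_succAbove _ j]
  simp [Real.volume_Icc, Fin.succAbove_ne, two_mul]

theorem ofReal_mul_pow_le_mul_volume_slab (hn : n ≠ 0) (j : Fin (n + 1))
    {d : Fin (n + 1) → ℝ} {M : ℝ} (hd : ∀ i, |d i| ≤ M) (r h : ℝ) :
    ENNReal.ofReal (2 * h) * ENNReal.ofReal (2 * r) ^ n ≤ n * volume (slab j d M r h) := by
  rw [← volume_pi_Icc_ite j r h]
  calc _ ≤ _ := measure_mono (pi_Icc_subset_iUnion_preimage_flipSigns_slab hn j hd r h)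
    _ ≤ _ := measure_biUnion_finset_le _ _
    _ = n * volume (slab j d M r h) := by
      simp [(measurePreserving_flipSigns _).measure_preimage
        (measurableSet_slab j d M r h).nullMeasurableSet]

theorem lt_volume_slab (hn : n ≠ 0) (j : Fin (n + 1)) {d : Fin (n + 1) → ℝ} {M : ℝ}
    (hd : ∀ i, |d i| ≤ M) {c r h : ℝ} (hc : 0 ≤ c) (hr : 0 ≤ r) (hcrh : n * c < h * r ^ n) :
    ENNReal.ofReal c * 2 ^ (n + 1) < volume (slab j d M r h) := by
  have hn' : (n : ENNReal) ≠ 0 := by exact_mod_cast hn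
  refine (ENNReal.mul_right_strictMono hn' (ENNReal.natCast_ne_top n)).lt_iff_lt.1 ?_
  refine lt_of_lt_of_le ?_ (ofReal_mul_pow_le_mul_volume_slab hn j hd r h)
  have hh : 0 < h := pos_of_mul_pos_left (lt_of_le_of_lt (by positivity) hcrh) (by positivity)
  have hlt : (n : ℝ) * (c * 2 ^ (n + 1)) < 2 * h * (2 * r) ^ n :=
    calc (n : ℝ) * (c * 2 ^ (n + 1)) = 2 ^ (n + 1) * (n * c) := by ring
      _ < 2 ^ (n + 1) * (h * r ^ n) := by gcongr
      _ = 2 * h * (2 * r) ^ n := by ring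
  rwa [← ENNReal.ofReal_ofNat 2, ← ENNReal.ofReal_pow zero_le_two, ← ENNReal.ofReal_natCast,
    ← ENNReal.ofReal_mul hc, ← ENNReal.ofReal_mul (Nat.cast_nonneg n),
    ← ENNReal.ofReal_pow (by positivity), ← ENNReal.ofReal_mul (by positivity),
    ENNReal.ofReal_lt_ofReal_iff (lt_of_le_of_lt (by positivity) hlt)]

theorem norm_le_of_mem_slab {j : Fin (n + 1)} {d : Fin (n + 1) → ℝ} {M r h : ℝ}
    {y : Fin (n + 1) → ℝ} (hy : y ∈ slab j d M r h) (hdj : |d j| = M) (hM : 0 < M) (hr : 0 ≤ r)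
    (hdy : ∑ i, d i * y i = 0) : ‖y‖ ≤ r := by
  obtain ⟨hcoord, hmid, -⟩ := hy
  rw [Fin.sum_univ_succAbove _ j, add_eq_zero_iff_eq_neg] at hdy
  have hyj : |y j| ≤ r := by
    rw [← mul_le_mul_iff_right₀ hM]
    calc M * |y j| = |d j * y j| := by rw [abs_mul, hdj]
      _ ≤ M * r := by rwa [hdy, abs_neg]
  refine (pi_norm_le_iff_of_nonneg hr).2 fun i => ?_
  rw [Real.norm_eq_abs]
  rcases eq_or_ne i j with rfl | hi
  exacts [hyj, hcoord i hi]

end Slab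

theorem succMin_one_le_norm {m : ℕ} (A : Matrix (Fin m) (Fin m) ℝ) {z : Fin m → ℤ}
    (hz : A *ᵥ (fun i => (z i : ℝ)) ≠ 0) : succMin m A 1 ≤ ‖A *ᵥ fun i => (z i : ℝ)‖ :=
  csInf_le ⟨0, fun _ hR => hR.1.le⟩
    ⟨norm_pos_iff.2 hz, fun _ => z, linearIndependent_unique_iff.2 hz, fun _ => le_rfl⟩

theorem abs_le_intNormInf {n : ℕ} (x : Fin n → ℤ) (i : Fin n) : |(x i : ℝ)| ≤ intNormInf n x := by
  rw [intNormInf, ← Int.cast_abs, Int.abs_eq_natAbs]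
  exact_mod_cast Finset.le_sup (f := fun i => (x i).natAbs) (Finset.mem_univ i)

theorem exists_abs_eq_intNormInf {n : ℕ} (hn : n ≠ 0) (x : Fin n → ℤ) :
    ∃ i, |(x i : ℝ)| = intNormInf n x := by
  obtain ⟨i, -, hi⟩ := Finset.exists_mem_eq_sup Finset.univ
    (Finset.univ_nonempty_iff.2 ⟨⟨0, Nat.pos_of_ne_zero hn⟩⟩) fun i => (x i).natAbs
  exact ⟨i, by rw [intNormInf, hi, Nat.cast_natAbs, Int.cast_abs]⟩

theorem one_le_intNormInf {n : ℕ} {x : Fin n → ℤ} (hx : x ≠ 0) : 1 ≤ intNormInf n x := by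
  obtain ⟨i, hi⟩ := Function.ne_iff.1 hx
  calc (1 : ℝ) ≤ |(x i : ℝ)| := by exact_mod_cast Int.one_le_abs hi
    _ ≤ intNormInf n x := abs_le_intNormInf x i

theorem det_Bmat (n : ℕ) (c : ℝ) (β : Fin n → ℝ) : (Bmat n c β).det = c := by
  rw [det_of_isLowerTriangular, Fin.prod_univ_succ]
  · simp [Bmat, Fin.succ_ne_zero]
  · intro i k hik
    have hik : i < k := hik
    simp [Bmat, ((Fin.zero_le i).trans_lt hik).ne', hik.ne]

theorem Bmat_mulVec (n : ℕ) (c : ℝ) (β : Fin n → ℝ) (w : Fin (n + 1) → ℝ) :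
    Bmat n c β *ᵥ w = Fin.cons (c * w 0) fun k => β k * w 0 + w k.succ := by
  ext i
  refine Fin.cases ?_ (fun k => ?_) i
  · simp [Bmat, mulVec, dotProduct, Fin.sum_univ_succ, (Fin.succ_ne_zero _).symm]
  · simp [Bmat, mulVec, dotProduct, Fin.sum_univ_succ, Fin.succ_ne_zero]

theorem sum_cons_mul_Bmat_mulVec {n : ℕ} {c : ℝ} (hc : c ≠ 0) (β x : Fin n → ℝ)
    (w : Fin (n + 1) → ℝ) :
    ∑ i, (Fin.cons (-(∑ k, x k * β k) / c) x : Fin (n + 1) → ℝ) i * (Bmat n c β *ᵥ w) i =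
      ∑ k, x k * w k.succ := by
  rw [Bmat_mulVec, Fin.sum_univ_succ]
  simp only [Fin.cons_zero, Fin.cons_succ, mul_add, Finset.sum_add_distrib]
  have hxβ : ∑ k, x k * (β k * w 0) = (∑ k, x k * β k) * w 0 := by
    simp only [Finset.sum_mul, mul_assoc]
  rw [hxβ]
  field_simp
  ring

theorem le_rpow_two_thirds_of_rpow_three_halves_le {P Q : ℝ} (hP : 0 ≤ P)
    (h : P ^ (3 / 2 : ℝ) ≤ Q) : P ≤ Q ^ (2 / 3 : ℝ) := by
  calc P = (P ^ (3 / 2 : ℝ)) ^ (2 / 3 : ℝ) := by rw [← Real.rpow_mul hP]; norm_num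
    _ ≤ Q ^ (2 / 3 : ℝ) := by gcongr

theorem mul_le_rpow_three_halves {P : ℝ} (hP : 2 ≤ P) : 5 / 4 * P ≤ P ^ (3 / 2 : ℝ) := by
  have hsqrt : 5 / 4 ≤ √P := Real.le_sqrt_of_sq_le (by linarith)
  calc 5 / 4 * P ≤ √P * P := by gcongr
    _ = P ^ (3 / 2 : ℝ) := by
      rw [Real.sqrt_eq_rpow, ← Real.rpow_add_one (by linarith)]; norm_num

theorem rpow_pow_mul_rpow_two_thirds {Q : ℝ} (hQ : 0 < Q) {n : ℕ} (hn : n ≠ 0) :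
    (Q ^ ((1 : ℝ) + 1 / (3 * n))) ^ n * Q ^ (2 / 3 : ℝ) = Q ^ (n + 1) := by
  rw [← Real.rpow_natCast _ n, ← Real.rpow_mul hQ.le, ← Real.rpow_add hQ, ← Real.rpow_natCast]
  congr 1
  field_simp
  push_cast
  ring

theorem exists_slab_radii {n : ℕ} (hn : n ≠ 0) {M c N : ℝ} (hM : 0 ≤ M) (hc : 0 < c)
    (hN : 0 < N) (hMN : 5 * M ≤ 2 * N) (hcN : 2 * n * M * c * N ^ n ≤ 1) :
    ∃ r h : ℝ, 0 ≤ r ∧ r < 1 / N ∧ n * c < h * r ^ n ∧ M * (r + h) < 1 := by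
  obtain ⟨t, ht0, ht1, htn⟩ : ∃ t : ℝ, 0 < t ∧ t < 1 ∧ 15 / 16 ≤ t ^ n := by
    have hn1 : (1 : ℝ) ≤ n := by exact_mod_cast Nat.one_le_iff_ne_zero.2 hn
    have hε : 1 / (16 * (n : ℝ)) ≤ 1 / 16 := by gcongr; linarith
    have hε0 : 0 < 1 / (16 * (n : ℝ)) := by positivity
    refine ⟨1 - 1 / (16 * n), by linarith, by linarith, ?_⟩
    calc (15 / 16 : ℝ) = 1 + n * -(1 / (16 * n)) := by field_simp; ring
      _ ≤ (1 + -(1 / (16 * n))) ^ n := one_add_mul_le_pow (by linarith) n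
      _ = (1 - 1 / (16 * n)) ^ n := by ring
  have hr : 0 < t / N := by positivity
  refine ⟨t / N, 16 / 15 * n * c / (t / N) ^ n, hr.le, by gcongr, ?_, ?_⟩
  · rw [div_mul_cancel₀ _ (by positivity)]
    nlinarith [show (0 : ℝ) < n * c by positivity]
  · have hMr : M * (t / N) ≤ 2 / 5 := by
      rw [mul_div_assoc', div_le_iff₀ hN]; nlinarith
    have hMh : M * (16 / 15 * n * c / (t / N) ^ n) ≤ 128 / 225 := by
      rw [div_pow, mul_div_assoc', div_div_eq_mul_div, div_le_iff₀ (by positivity)]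
      nlinarith
    linarith

theorem le_abs_sum_mul_of_inv_le_succMin {n : ℕ} (β : Fin n → ℝ) {x : Fin n → ℤ} (hx : x ≠ 0)
    {c N : ℝ} (hc : 0 < c) (hN : 0 < N) (hMN : 5 * intNormInf n x ≤ 2 * N)
    (hcN : 2 * n * intNormInf n x * c * N ^ n ≤ 1)
    (hlam : 1 / N ≤ succMin (n + 1) (Bmat n c β) 1) : c ≤ |∑ i, (x i : ℝ) * β i| := by
  have hn : n ≠ 0 := by rintro rfl; exact hx (Subsingleton.elim _ _)
  have hM : 1 ≤ intNormInf n x := one_le_intNormInf hx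
  by_contra! hs
  obtain ⟨r, h, hr, hrN, hvol, hMrh⟩ := exists_slab_radii hn (by linarith) hc hN hMN hcN
  obtain ⟨k₀, hk₀⟩ := exists_abs_eq_intNormInf hn x
  set d : Fin (n + 1) → ℝ := Fin.cons (-(∑ k, (x k : ℝ) * β k) / c) fun k => (x k : ℝ)
  have hd : ∀ i, |d i| ≤ intNormInf n x := by
    refine Fin.cases ?_ fun k => abs_le_intNormInf x k
    rw [show d 0 = _ from Fin.cons_zero _ _, abs_div, abs_neg, abs_of_pos hc, div_le_iff₀ hc]
    nlinarith
  obtain ⟨z, hz0, hzK⟩ := exists_mulVec_intCast_ne_zero_mem (Bmat n c β)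
    (by rw [det_Bmat]; exact hc.ne') (fun _ => neg_mem_slab) (convex_slab k₀.succ d _ r h)
    (by rw [det_Bmat, abs_of_pos hc, Fintype.card_fin]
        exact lt_volume_slab hn k₀.succ hd hc.le hr hvol)
  set y := Bmat n c β *ᵥ fun i => (z i : ℝ)
  have hdy : ∑ i, d i * y i = ((∑ k, x k * z k.succ : ℤ) : ℝ) := by
    rw [sum_cons_mul_Bmat_mulVec hc.ne']
    push_cast
    rfl
  have hdy0 : ∑ i, d i * y i = 0 := by
    have hlt := hdy ▸ hzK.2.2.trans_lt hMrh
    rw [hdy, Int.cast_eq_zero, ← Int.abs_lt_one_iff]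
    exact_mod_cast hlt
  have hshort := norm_le_of_mem_slab hzK (by simpa [d] using hk₀) (by linarith) hr hdy0
  linarith [succMin_one_le_norm (Bmat n c β) hz0]

theorem separation_from_lattice_minimum_general
    (n : ℕ) (a : Fin n → ℕ) (x : Fin n → ℤ) (hx : x ≠ 0)
    (Q : ℝ)
    (hQ : (2 * (n : ℝ) * intNormInf n x) ^ ((3 : ℝ) / 2) ≤ Q)
    (hlam : 1 / Q ^ ((1 : ℝ) + 1 / (3 * n)) ≤
      succMin (n + 1) (Bmat n (1 / Q ^ (n + 1)) fun i => Real.sqrt (a i)) 1) :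
    1 / Q ^ (n + 1) ≤ |∑ i, (x i : ℝ) * Real.sqrt (a i)| := by
  have hn : n ≠ 0 := by rintro rfl; exact hx (Subsingleton.elim _ _)
  have hn1 : (1 : ℝ) ≤ n := by exact_mod_cast Nat.one_le_iff_ne_zero.2 hn
  have hM := one_le_intNormInf hx
  have hP : 2 ≤ 2 * (n : ℝ) * intNormInf n x := by nlinarith
  have hQP : 5 / 4 * (2 * n * intNormInf n x) ≤ Q := (mul_le_rpow_three_halves hP).trans hQ
  have hQ0 : 0 < Q := by linarith
  have hQN : Q ≤ Q ^ ((1 : ℝ) + 1 / (3 * n)) :=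
    Real.self_le_rpow_of_one_le (by linarith) (by simp only [le_add_iff_nonneg_right]; positivity)
  have hP23 := le_rpow_two_thirds_of_rpow_three_halves_le (by linarith) hQ
  refine le_abs_sum_mul_of_inv_le_succMin _ hx (by positivity) (by positivity) (by nlinarith) ?_
    hlam
  calc 2 * n * intNormInf n x * (1 / Q ^ (n + 1)) * (Q ^ ((1 : ℝ) + 1 / (3 * n))) ^ n
      = 2 * n * intNormInf n x / Q ^ (2 / 3 : ℝ) := by
        rw [← rpow_pow_mul_rpow_two_thirds hQ0 hn]
        field_simp
    _ ≤ 1 := div_le_one_of_le₀ hP23 (by positivity)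

/-- If the first successive minimum of `Λ(B)` is not too small, then
`|∑ xᵢ √aᵢ| ≥ 1/Q^{n+1}`. -/
theorem separation_from_lattice_minimum
    (n : ℕ) (a : Fin n → ℕ) (ha : ∀ i, 0 < a i) (x : Fin n → ℤ) (hx : x ≠ 0)
    (Q : ℝ)
    (hQ : (2 * (n : ℝ) * intNormInf n x) ^ ((3 : ℝ) / 2) ≤ Q)
    (hlam : 1 / Q ^ ((1 : ℝ) + 1 / (3 * n)) ≤
      succMin (n + 1) (Bmat n (1 / Q ^ (n + 1)) fun i => Real.sqrt (a i)) 1) :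
    1 / Q ^ (n + 1) ≤ |∑ i, (x i : ℝ) * Real.sqrt (a i)| :=
  separation_from_lattice_minimum_general n a x hx Q hQ hlam
end

section
/- Assume the following form of the subspace theorem: for real algebraic numbers $\beta_1,\dots,\beta_n$ with $\{1,\beta_1,\dots,\beta_n\}$ linearly independent over $\mathbb{Q}$ and any $\delta>0$, the set of positive integers $q$ with $q^{1+\delta}\,\mathrm{dist}_{\mathbb{Z}}(q\beta_1)\cdots\mathrm{dist}_{\mathbb{Z}}(q\beta_n) < 1$ is finite. Let $a_1,\dots,a_n$ be distinct square-free positive integers, all $> 1$, and set $\beta_i = \sqrt{a_i}$, $\delta = \frac{1}{3n}$. Then there exists $Q_0 \in \mathbb{N}$ such that for all real $Q \geq Q_0$, every positive integer $q \leq Q^{n-\delta}$ satisfies $\max_i \mathrm{dist}_{\mathbb{Z}}(q\beta_i) > 1/Q^{1+\delta}$. -/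
/-!
Write `√U = ∏_{p ∈ U} √p` for a finite set `U` of primes. By induction on a finite set `S` of
primes, `√U ∉ ℚ(√p : p ∈ S)` whenever `U ⊄ S`: an element of `F(√p)` whose square lies in `F`
lies in `F` or in `F √p`, and `√U √p` is a rational multiple of `√(U ∆ {p})`. Consequently the
`√U` with `U ⊆ insert p T` split into those with `p ∉ U`, spanning a subspace of `F = ℚ(√T)`, and
`√p` times these, spanning a subspace of `√p F`, which meets `F` only in `0`. So the `√U` are
ℚ-linearly independent, i.e. so are the square roots of distinct squarefree integers, and
`1, √a₁, …, √aₙ` satisfy the hypotheses of the subspace theorem with `δ = 1/(3n)`.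

If `q ≤ Q^{n-δ}` and `distZ (q √aᵢ) ≤ Q^{-(1+δ)}` for all `i`, then
`q^{1+δ} ∏ᵢ distZ (q √aᵢ) ≤ Q^{-δ(1+δ)} < 1`, so `q` lies in the finite exceptional set, on which
`distZ (q √a₁)` is bounded below by some `ε > 0`; this contradicts `distZ (q √a₁) ≤ 1/Q` once
`Q > 1/ε`.
-/

namespace Subfield

variable {L : Type*} [Field L] {F : Subfield L} {α : L}

theorem exists_add_mul_eq_of_mem_closure_insert (hα2 : α ^ 2 ∈ F) (hα : α ∉ F) {x : L}
    (hx : x ∈ closure (insert α (F : Set L))) : ∃ a ∈ F, ∃ b ∈ F, x = a + b * α := by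
  induction hx using closure_induction with
  | mem x hx =>
    rcases hx with rfl | hx
    · exact ⟨0, F.zero_mem, 1, F.one_mem, by ring⟩
    · exact ⟨x, hx, 0, F.zero_mem, by ring⟩
  | one => exact ⟨1, F.one_mem, 0, F.zero_mem, by ring⟩
  | add x y _ _ ihx ihy =>
    obtain ⟨a, ha, b, hb, rfl⟩ := ihx
    obtain ⟨c, hc, d, hd, rfl⟩ := ihy
    exact ⟨a + c, add_mem ha hc, b + d, add_mem hb hd, by ring⟩
  | neg x _ ihx =>
    obtain ⟨a, ha, b, hb, rfl⟩ := ihx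
    exact ⟨-a, neg_mem ha, -b, neg_mem hb, by ring⟩
  | mul x y _ _ ihx ihy =>
    obtain ⟨a, ha, b, hb, rfl⟩ := ihx
    obtain ⟨c, hc, d, hd, rfl⟩ := ihy
    exact ⟨a * c + b * d * α ^ 2, add_mem (mul_mem ha hc) (mul_mem (mul_mem hb hd) hα2),
      a * d + b * c, add_mem (mul_mem ha hd) (mul_mem hb hc), by ring⟩
  | inv x _ ihx =>
    obtain ⟨a, ha, b, hb, rfl⟩ := ihx
    -- `(a + bα)⁻¹ = (a - bα) / N` with `N ∈ F`, and `N = 0` forces `a = b = 0` as `α ∉ F`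
    set N := a ^ 2 - b ^ 2 * α ^ 2 with hN
    have hN_mem : N ∈ F := sub_mem (pow_mem ha 2) (mul_mem (pow_mem hb 2) hα2)
    by_cases hN0 : N = 0
    · have hb0 : b = 0 := by
        by_contra hb0
        have hfac : (a - b * α) * (a + b * α) = 0 := by rw [← hN0]; ring
        rcases mul_eq_zero.mp hfac with h | h
        · refine hα ?_
          rw [show α = a / b by field_simp; linear_combination -h]
          exact div_mem ha hb
        · refine hα ?_
          rw [show α = -a / b by field_simp; linear_combination h]
          exact div_mem (neg_mem ha) hb
      have ha0 : a = 0 := by simpa [hN, hb0] using hN0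
      exact ⟨0, F.zero_mem, 0, F.zero_mem, by simp [ha0, hb0]⟩
    · refine ⟨a / N, div_mem ha hN_mem, -(b / N), neg_mem (div_mem hb hN_mem), ?_⟩
      refine inv_eq_of_mul_eq_one_right ?_
      field_simp
      ring

theorem mem_or_mul_mem_of_mem_closure_insert [NeZero (2 : L)] (hα2 : α ^ 2 ∈ F) (hα : α ∉ F)
    {x : L} (hx : x ∈ closure (insert α (F : Set L))) (hx2 : x ^ 2 ∈ F) :
    x ∈ F ∨ x * α ∈ F := by
  obtain ⟨a, ha, b, hb, rfl⟩ := exists_add_mul_eq_of_mem_closure_insert hα2 hα hx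
  have hab : 2 * a * b * α ∈ F := by
    have h := sub_mem hx2 (add_mem (pow_mem ha 2) (mul_mem (pow_mem hb 2) hα2))
    convert h using 1
    ring
  have hab0 : 2 * a * b = 0 := by
    by_contra h
    exact hα (by simpa [h] using div_mem hab (mul_mem (mul_mem (ofNat_mem F 2) ha) hb))
  rcases mul_eq_zero.mp hab0 with h | rfl
  · rw [(mul_eq_zero.mp h).resolve_left two_ne_zero]
    exact .inr (by simpa [sq, mul_assoc] using mul_mem hb hα2)
  · exact .inl (by simpa using ha)

theorem mem_of_mem_span_rat [CharZero L] {K : Subfield L} {s : Set L} (hs : s ⊆ K) {x : L}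
    (hx : x ∈ Submodule.span ℚ s) : x ∈ K := by
  induction hx using Submodule.span_induction with
  | mem x hx => exact hs hx
  | zero => exact K.zero_mem
  | add x y _ _ hx hy => exact add_mem hx hy
  | smul q x _ hx => exact SubfieldClass.qsmul_mem K q hx

theorem disjoint_span_rat_mul [CharZero L] {K : Subfield L} {s : Set L} (hs : s ⊆ K)
    (hα : α ∉ K) : Disjoint (Submodule.span ℚ s) (Submodule.span ℚ ((α * ·) '' s)) := by
  rw [Submodule.disjoint_def]
  intro x hx hαx
  rw [show ((α * ·) '' s) = LinearMap.mulLeft ℚ α '' s from rfl, Submodule.span_image,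
    Submodule.mem_map] at hαx
  obtain ⟨y, hy, rfl⟩ := hαx
  have hyK : y ∈ K := mem_of_mem_span_rat hs hy
  by_contra hαy
  have hy0 : y ≠ 0 := by rintro rfl; simp at hαy
  exact hα (by simpa [hy0] using div_mem (mem_of_mem_span_rat hs hx) hyK)

end Subfield

open Real

noncomputable def sqrtField (S : Finset ℕ) : Subfield ℝ :=
  Subfield.closure ((fun p : ℕ => √(p : ℝ)) '' S)

noncomputable def sqrtProd (U : Finset ℕ) : ℝ := ∏ p ∈ U, √(p : ℝ)

theorem sqrtProd_eq_sqrt_prod (U : Finset ℕ) : sqrtProd U = √((∏ p ∈ U, p : ℕ) : ℝ) := by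
  rw [sqrtProd, Nat.cast_prod, Real.sqrt_prod _ fun p _ => Nat.cast_nonneg p]

theorem sqrtProd_primeFactors {m : ℕ} (hm : Squarefree m) : sqrtProd m.primeFactors = √m := by
  rw [sqrtProd_eq_sqrt_prod, Nat.prod_primeFactors_of_squarefree hm]

theorem sqrtProd_mem_sqrtField {U S : Finset ℕ} (h : U ⊆ S) : sqrtProd U ∈ sqrtField S :=
  prod_mem fun p hp => Subfield.subset_closure ⟨p, h hp, rfl⟩

theorem sqrtField_insert_le (p : ℕ) (T : Finset ℕ) :
    sqrtField (insert p T) ≤ Subfield.closure (insert √(p : ℝ) (sqrtField T : Set ℝ)) := by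
  rw [sqrtField, Finset.coe_insert, Set.image_insert_eq, Subfield.closure_le]
  exact (Set.insert_subset_insert Subfield.subset_closure).trans Subfield.subset_closure

theorem irrational_sqrt_of_squarefree {m : ℕ} (hm : Squarefree m) (h1 : m ≠ 1) :
    Irrational √(m : ℝ) := by
  rw [irrational_sqrt_natCast_iff]
  rintro ⟨k, rfl⟩
  exact h1 (by rw [Nat.isUnit_iff.mp (hm k dvd_rfl), mul_one])

theorem irrational_sqrtProd {U : Finset ℕ} (hU : ∀ p ∈ U, p.Prime) (hne : U.Nonempty) :
    Irrational (sqrtProd U) := by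
  rw [sqrtProd_eq_sqrt_prod]
  refine irrational_sqrt_of_squarefree ?_ fun h => hne.ne_empty ?_
  · refine Finset.squarefree_prod_of_pairwise_isCoprime (fun p hp q hq hpq => ?_)
      fun p hp => (hU p hp).squarefree
    exact Nat.coprime_iff_isRelPrime.mp ((Nat.coprime_primes (hU p hp) (hU q hq)).mpr hpq)
  · rw [← Nat.primeFactors_prod hU, h, Nat.primeFactors_one]

theorem sqrtProd_notMem_sqrtField {S : Finset ℕ} (hS : ∀ p ∈ S, p.Prime) {U : Finset ℕ}
    (hU : ∀ p ∈ U, p.Prime) (hUS : ¬U ⊆ S) : sqrtProd U ∉ sqrtField S := by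
  induction S using Finset.induction_on generalizing U with
  | empty =>
    intro hmem
    have hrat : sqrtField ∅ ≤ (Rat.castHom ℝ).fieldRange := by
      simp [sqrtField, Subfield.closure_empty]
    obtain ⟨r, hr⟩ := hrat hmem
    exact irrational_sqrtProd hU (Finset.nonempty_iff_ne_empty.mpr (by simpa using hUS)) ⟨r, hr⟩
  | insert p T hpT ih =>
    have hT : ∀ q ∈ T, q.Prime := fun q hq => hS q (Finset.mem_insert_of_mem hq)
    have hp : p.Prime := hS p (Finset.mem_insert_self p T)
    obtain ⟨q, hqU, hqS⟩ := Finset.not_subset.mp hUS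
    have hqT : q ∉ T := fun h => hqS (Finset.mem_insert_of_mem h)
    have hqp : q ≠ p := fun h => hqS (h ▸ Finset.mem_insert_self p T)
    have hU_sq : sqrtProd U ^ 2 ∈ sqrtField T := by
      rw [sqrtProd_eq_sqrt_prod, sq_sqrt (Nat.cast_nonneg _)]
      exact natCast_mem _ _
    have hsqrt_p : √(p : ℝ) ∉ sqrtField T := by
      simpa [sqrtProd] using ih hT (U := {p}) (by simp [hp]) (by simpa using hpT)
    intro hmem
    rcases Subfield.mem_or_mul_mem_of_mem_closure_insert (by simp)
      hsqrt_p (sqrtField_insert_le p T hmem) hU_sq with h | h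
    · exact ih hT hU (fun h' => hqT (h' hqU)) h
    by_cases hpU : p ∈ U
    · have hmul : sqrtProd U * √(p : ℝ) = p * sqrtProd (U.erase p) := by
        rw [sqrtProd, ← Finset.mul_prod_erase U _ hpU, sqrtProd, mul_comm, ← mul_assoc,
          mul_self_sqrt (Nat.cast_nonneg _)]
      refine ih hT (fun r hr => hU r (Finset.mem_of_mem_erase hr))
        (fun h' => hqT (h' (Finset.mem_erase.mpr ⟨hqp, hqU⟩))) ?_
      have hp0 : (p : ℝ) ≠ 0 := by exact_mod_cast hp.ne_zero
      simpa [hmul, hp0] using div_mem h (natCast_mem (sqrtField T) p)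
    · have hmul : sqrtProd U * √(p : ℝ) = sqrtProd (insert p U) := by
        rw [sqrtProd, sqrtProd, Finset.prod_insert hpU, mul_comm]
      refine ih hT (Finset.forall_mem_insert _ _ _ |>.mpr ⟨hp, hU⟩)
        (fun h' => hqT (h' (Finset.mem_insert_of_mem hqU))) ?_
      rwa [← hmul]

theorem linearIndepOn_sqrtProd_powerset {S : Finset ℕ} (hS : ∀ p ∈ S, p.Prime) :
    LinearIndepOn ℚ sqrtProd (S.powerset : Set (Finset ℕ)) := by
  induction S using Finset.induction_on with
  | empty => simp [sqrtProd]
  | insert p T hpT ih =>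
    have hT : ∀ q ∈ T, q.Prime := fun q hq => hS q (Finset.mem_insert_of_mem hq)
    have hp : p.Prime := hS p (Finset.mem_insert_self p T)
    have hsqrt_p : √(p : ℝ) ∉ sqrtField T := by
      simpa [sqrtProd] using
        sqrtProd_notMem_sqrtField hT (U := {p}) (by simp [hp]) (by simpa using hpT)
    have hsqrt_p0 : √(p : ℝ) ≠ 0 := fun h => hsqrt_p (h ▸ zero_mem _)
    have hins : Set.EqOn (fun U => sqrtProd (insert p U)) (√(p : ℝ) * sqrtProd ·) T.powerset :=
      fun U hU => by simp [sqrtProd, Finset.prod_insert fun h => hpT (Finset.mem_powerset.mp hU h)]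
    have hmul : LinearIndepOn ℚ (√(p : ℝ) * sqrtProd ·) T.powerset :=
      (ih hT).map' (LinearMap.mulLeft ℚ √(p : ℝ))
        (LinearMap.ker_eq_bot.mpr (mul_right_injective₀ hsqrt_p0))
    have hli : LinearIndepOn ℚ sqrtProd (insert p '' T.powerset) :=
      .image_of_comp _ _ (hmul.congr hins.symm)
    rw [Finset.powerset_insert, Finset.coe_union, Finset.coe_image]
    refine (ih hT).union hli ?_
    rw [Set.image_image, Set.image_congr hins, ← Set.image_image (√(p : ℝ) * ·)]
    refine Subfield.disjoint_span_rat_mul ?_ hsqrt_p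
    rintro _ ⟨U, hU, rfl⟩
    exact sqrtProd_mem_sqrtField (Finset.mem_powerset.mp hU)

theorem linearIndepOn_sqrtProd : LinearIndepOn ℚ sqrtProd {U : Finset ℕ | ∀ p ∈ U, p.Prime} := by
  refine linearIndepOn_of_finite _ fun t ht htfin => ?_
  refine (linearIndepOn_sqrtProd_powerset (S := htfin.toFinset.biUnion id) ?_).mono ?_
  · simp only [Finset.mem_biUnion, Set.Finite.mem_toFinset, id]
    rintro p ⟨U, hU, hpU⟩
    exact ht hU p hpU
  · intro U hU
    exact Finset.mem_powerset.mpr fun p hp =>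
      Finset.mem_biUnion.mpr ⟨U, htfin.mem_toFinset.mpr hU, hp⟩

theorem linearIndependent_sqrt_of_squarefree {ι : Type*} {b : ι → ℕ} (hb : Function.Injective b)
    (hsf : ∀ i, Squarefree (b i)) : LinearIndependent ℚ fun i => √(b i : ℝ) := by
  have hinj : Function.Injective fun i => (b i).primeFactors := fun i j h => hb <| by
    simpa [Nat.prod_primeFactors_of_squarefree, hsf] using congrArg (∏ p ∈ ·, p) h
  have hli := linearIndepOn_sqrtProd.comp
    (fun i => ⟨(b i).primeFactors, fun _ => Nat.prime_of_mem_primeFactors⟩)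
    fun i j h => hinj (congrArg Subtype.val h)
  simpa [Function.comp_def, sqrtProd_primeFactors (hsf _)] using hli

theorem isAlgebraic_sqrt_natCast (m : ℕ) : IsAlgebraic ℚ √(m : ℝ) :=
  IsAlgebraic.of_pow two_pos (by rw [sq_sqrt (Nat.cast_nonneg m)]; exact isAlgebraic_natCast m)

theorem distZ_pos_of_irrational {x : ℝ} (hx : Irrational x) : 0 < distZ x :=
  abs_pos.mpr (sub_ne_zero.mpr (hx.ne_int (round x)))

theorem Set.Finite.exists_pos_forall_le {α : Type*} {s : Set α} (hs : s.Finite) {f : α → ℝ}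
    (hf : ∀ x ∈ s, 0 < f x) : ∃ ε > 0, ∀ x ∈ s, ε ≤ f x := by
  rcases s.eq_empty_or_nonempty with rfl | hne
  · exact ⟨1, one_pos, by simp⟩
  · obtain ⟨x, hx, hmin⟩ := Set.exists_min_image s f hs hne
    exact ⟨f x, hf x hx, hmin⟩

theorem rpow_mul_prod_lt_one {ι : Type*} [Fintype ι] {δ Q x : ℝ} {f : ι → ℝ} (hδ : 0 < δ)
    (hQ : 1 < Q) (hx0 : 0 ≤ x) (hx : x ≤ Q ^ ((Fintype.card ι : ℝ) - δ))
    (hf0 : ∀ i, 0 ≤ f i) (hf : ∀ i, f i ≤ 1 / Q ^ (1 + δ)) : x ^ (1 + δ) * ∏ i, f i < 1 := by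
  have hQ0 : 0 < Q := by linarith
  calc x ^ (1 + δ) * ∏ i, f i
      ≤ (Q ^ ((Fintype.card ι : ℝ) - δ)) ^ (1 + δ) * ∏ _i : ι, 1 / Q ^ (1 + δ) := by
        gcongr with i
        · exact Finset.prod_nonneg fun i _ => hf0 i
        · exact fun i _ => hf0 i
        · exact hf i
    _ = Q ^ (-(δ * (1 + δ))) := by
        rw [Finset.prod_const, Finset.card_univ, ← rpow_mul hQ0.le, one_div, ← rpow_neg hQ0.le,
          ← rpow_natCast, ← rpow_mul hQ0.le, ← rpow_add hQ0]
        ring_nf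
    _ < 1 := rpow_lt_one_of_one_lt_of_neg hQ (by nlinarith)

/-- Assuming the subspace theorem, for distinct square-free radicands `> 1`
there is a threshold `Q₀` beyond which no small `q` approximates all `√aᵢ`
well. -/
theorem no_good_approximation_beyond_threshold
    (subspace : ∀ (m : ℕ) (β : Fin m → ℝ), (∀ i, IsAlgebraic ℚ (β i)) →
      LinearIndependent ℚ (Fin.cons 1 β : Fin (m + 1) → ℝ) →
      ∀ δ : ℝ, 0 < δ →
        {q : ℕ | 0 < q ∧ (q : ℝ) ^ (1 + δ) * ∏ i, distZ ((q : ℝ) * β i) < 1}.Finite)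
    (n : ℕ) (hn : 1 ≤ n) (a : Fin n → ℕ) (ha : ∀ i, 1 < a i)
    (hsf : ∀ i, Squarefree (a i)) (hinj : Function.Injective a) :
    ∃ Q₀ : ℕ, ∀ Q : ℝ, (Q₀ : ℝ) ≤ Q → ∀ q : ℕ, 0 < q →
      (q : ℝ) ≤ Q ^ ((n : ℝ) - 1 / (3 * n)) →
      ∃ i, 1 / Q ^ ((1 : ℝ) + 1 / (3 * n)) < distZ ((q : ℝ) * Real.sqrt (a i)) := by
  have hδ : (0 : ℝ) < 1 / (3 * n) := by
    have : (0 : ℝ) < n := by exact_mod_cast hn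
    positivity
  have hli : LinearIndependent ℚ (Fin.cons 1 fun i => √(a i : ℝ) : Fin (n + 1) → ℝ) := by
    convert linearIndependent_sqrt_of_squarefree (b := Fin.cons 1 a)
      (Fin.cons_injective_iff.mpr ⟨fun ⟨i, hi⟩ => (ha i).ne' hi, hinj⟩)
      (Fin.cases squarefree_one hsf) with i
    cases i using Fin.cases <;> simp
  have hfin := subspace n _ (fun i => isAlgebraic_sqrt_natCast (a i)) hli _ hδ
  let i₀ : Fin n := ⟨0, hn⟩
  have hirr : Irrational √(a i₀ : ℝ) := irrational_sqrt_of_squarefree (hsf i₀) (ha i₀).ne'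
  obtain ⟨ε, hε, hεle⟩ := hfin.exists_pos_forall_le (f := fun q => distZ (q * √(a i₀ : ℝ)))
    fun q hq => distZ_pos_of_irrational (hirr.natCast_mul hq.1.ne')
  obtain ⟨Q₀, hQ₀⟩ := exists_nat_gt (max 1 ε⁻¹)
  refine ⟨Q₀, fun Q hQ q hq hqQ => ?_⟩
  have hQ1 : 1 < Q := (le_max_left _ _).trans_lt (hQ₀.trans_le hQ)
  have hsmall : 1 / Q ^ ((1 : ℝ) + 1 / (3 * n)) < ε := calc
    1 / Q ^ ((1 : ℝ) + 1 / (3 * n)) ≤ Q⁻¹ := by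
      rw [one_div]
      exact inv_anti₀ (by linarith) (self_le_rpow_of_one_le hQ1.le (by linarith))
    _ < ε := inv_lt_of_inv_lt₀ hε ((le_max_right _ _).trans_lt (hQ₀.trans_le hQ))
  by_contra! hgood
  have hq_exc := hεle q ⟨hq, rpow_mul_prod_lt_one hδ hQ1 q.cast_nonneg
    (by rwa [Fintype.card_fin]) (fun _ => abs_nonneg _) hgood⟩
  exact hq_exc.not_gt ((hgood i₀).trans_lt hsmall)
end
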